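/- arXiv:1911.12525 — 9 statements merged into one kernel-verified Lean document; each statement's English description precedes it below -/
import Mathlib

section
/- Let F be a field and let m, r be integers with 0 ≤ r ≤ m. Let μ : Fin m → F be injective (i.e., μ_1, …, μ_m are m distinct elements of F), and let v, w : Fin m → F satisfy ∑_{i=1}^m μ_i^t · v_i = 0 and ∑_{i=1}^m μ_i^t · w_i = 0 for every t ∈ {0, …, r−1}. If there exists a set S ⊆ Fin m with |S| ≥ m − r such that v_i = w_i for all i ∈ S, then v = w. -/
/-!
The difference `d = v - w` satisfies the same parity checks and is supported on the at most `r`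
coordinates outside `S`, so it is orthogonal to `p(μ)` for every polynomial `p` of degree `< r`.
For each coordinate `i` of the support, the Lagrange basis polynomial of the support at `i` has
degree `< r`, and pairing it with `d` picks out `d i`, which is therefore zero.
-/

open Finset Polynomial

theorem sum_eval_mul_eq_zero_of_natDegree_lt {R ι : Type*} [CommSemiring R] [Fintype ι]
    {r : ℕ} {μ d : ι → R} (hd : ∀ t < r, ∑ i, μ i ^ t * d i = 0)
    {p : R[X]} (hp : p.natDegree < r) :
    ∑ i, p.eval (μ i) * d i = 0 := by
  calc ∑ i, p.eval (μ i) * d i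
      = ∑ t ∈ range r, p.coeff t * ∑ i, μ i ^ t * d i := by
        simp only [eval_eq_sum_range' hp, sum_mul, mul_sum, mul_assoc]
        exact sum_comm
    _ = 0 := sum_eq_zero fun t ht => by rw [hd t (mem_range.mp ht), mul_zero]

theorem eq_zero_of_sum_pow_mul_eq_zero {F ι : Type*} [Field F] [Fintype ι] [DecidableEq ι]
    {r : ℕ} {μ d : ι → F} (hd : ∀ t < r, ∑ i, μ i ^ t * d i = 0)
    {T : Finset ι} (hμ : Set.InjOn μ T) (hT : #T ≤ r) (hdT : ∀ i ∉ T, d i = 0) :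
    d = 0 := by
  funext i
  by_cases hi : i ∈ T
  swap
  · exact hdT i hi
  have hdeg : (Lagrange.basis T μ i).natDegree < r := by
    rw [Lagrange.natDegree_basis hμ hi]
    have := card_pos.mpr ⟨i, hi⟩
    omega
  have hpick : ∑ j, (Lagrange.basis T μ i).eval (μ j) * d j = d i := by
    rw [sum_eq_single i, Lagrange.eval_basis_self hμ hi, one_mul]
    · intro j _ hji
      by_cases hj : j ∈ T
      · rw [Lagrange.eval_basis_of_ne hji.symm hj, zero_mul]
      · rw [hdT j hj, mul_zero]
    · exact fun h => absurd (mem_univ i) h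
  rw [← hpick]
  exact sum_eval_mul_eq_zero_of_natDegree_lt hd hdeg

theorem stmt_0_general {F : Type*} [Field F] (m r : ℕ)
    (μ : Fin m → F) (hμ : Function.Injective μ)
    (v w : Fin m → F)
    (hv : ∀ t < r, ∑ i, μ i ^ t * v i = 0)
    (hw : ∀ t < r, ∑ i, μ i ^ t * w i = 0)
    (S : Finset (Fin m)) (hS : m - r ≤ S.card)
    (hvw : ∀ i ∈ S, v i = w i) :
    v = w := by
  have hd : ∀ t < r, ∑ i, μ i ^ t * (v - w) i = 0 := fun t ht => by
    simp only [Pi.sub_apply, mul_sub, sum_sub_distrib, hv t ht, hw t ht, sub_zero]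
  have hcard : #Sᶜ ≤ r := by
    rw [card_compl, Fintype.card_fin]
    omega
  have hsupp : ∀ i ∉ Sᶜ, (v - w) i = 0 := fun i hi =>
    sub_eq_zero.mpr (hvw i (by simpa using hi))
  exact sub_eq_zero.mp (eq_zero_of_sum_pow_mul_eq_zero hd hμ.injOn hcard hsupp)

/-- a vector satisfying `r` generalized Reed–Solomon parity-check
equations with distinct evaluation points is determined by any `m - r` of its
coordinates. -/
theorem stmt_0 {F : Type*} [Field F] (m r : ℕ) (hrm : r ≤ m)
    (μ : Fin m → F) (hμ : Function.Injective μ)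
    (v w : Fin m → F)
    (hv : ∀ t < r, ∑ i, μ i ^ t * v i = 0)
    (hw : ∀ t < r, ∑ i, μ i ^ t * w i = 0)
    (S : Finset (Fin m)) (hS : m - r ≤ S.card)
    (hvw : ∀ i ∈ S, v i = w i) :
    v = w :=
  stmt_0_general m r μ hμ v w hv hw S hS hvw
end

section
/- For every s ≥ 1, m ≥ 1 and every injective λ : {1,…,n} × {0,…,s−1} → F, the code C(n,k,s,m,λ) is an MDS array code: if c and c' are codewords of C(n,k,s,m,λ) and S ⊆ {1,…,n} is a set with |S| = k such that c(i,b,a) = c'(i,b,a) for every i ∈ S, every b ∈ {1,…,m} and every a ∈ {0,…,s−1}^n, then c = c'. -/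
/-- The code `C(n,k,s,m,λ)`: an array `c : {1,…,n} × {1,…,m} × {0,…,s-1}^n → F`
(node index `i : Fin n`, block index `b ∈ {1,…,m}` as a natural number,
`a : Fin n → Fin s`) satisfying the parity-check equations
`∑_{i=1}^n λ(i,a_i)^t · c(i,b,a) = 0` for all `t ∈ {0,…,n-k-1}`,
`b ∈ {1,…,m}` and `a ∈ {0,…,s-1}^n`. -/
def IsCodeword {F : Type*} [Field F] {n : ℕ} (k s m : ℕ)
    (lam : Fin n → Fin s → F) (c : Fin n → ℕ → (Fin n → Fin s) → F) : Prop :=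
  ∀ t < n - k, ∀ b ∈ Finset.Icc 1 m, ∀ a : Fin n → Fin s,
    ∑ i, lam i (a i) ^ t * c i b a = 0

/-!
For fixed `b` and `a`, the parity checks say that the column `i ↦ c(i,b,a)` lies in the kernel of
the `(n-k) × n` Vandermonde matrix with the distinct nodes `λ(i,a_i)`. Any `n-k` of its columns
form an invertible Vandermonde matrix, so a codeword vanishing on `k` nodes vanishes everywhere;
apply this to the difference of two codewords.
-/

open Finset

theorem Finset.eq_zero_of_forall_sum_pow_mul_eq_zero {R ι : Type*} [CommRing R] [IsDomain R]
    {T : Finset ι} {v d : ι → R} (hv : Set.InjOn v T)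
    (h : ∀ t < #T, ∑ x ∈ T, v x ^ t * d x = 0) : ∀ x ∈ T, d x = 0 := by
  set e := T.equivFin
  have hinj : Function.Injective fun j => v (e.symm j) := fun j j' hjj' =>
    e.symm.injective (Subtype.ext (hv (e.symm j).2 (e.symm j').2 hjj'))
  have hzero : (fun j => d (e.symm j)) = 0 := by
    refine Matrix.eq_zero_of_forall_pow_sum_mul_pow_eq_zero hinj fun t => ?_
    rw [← h t t.2, ← T.sum_coe_sort, ← e.symm.sum_comp]
    simp only [mul_comm]
  intro x hx
  simpa using congrFun hzero (e ⟨x, hx⟩)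

namespace IsCodeword

variable {F : Type*} [Field F] {n k s m : ℕ} {lam : Fin n → Fin s → F}
  {c c' : Fin n → ℕ → (Fin n → Fin s) → F}

theorem sub (hc : IsCodeword k s m lam c) (hc' : IsCodeword k s m lam c') :
    IsCodeword k s m lam (c - c') := by
  intro t ht b hb a
  simp only [Pi.sub_apply, mul_sub, sum_sub_distrib, hc t ht b hb a, hc' t ht b hb a, sub_zero]

theorem eq_zero_of_eq_zero_on (hc : IsCodeword k s m lam c)
    (hlam : Function.Injective fun p : Fin n × Fin s => lam p.1 p.2)
    {S : Finset (Fin n)} (hS : k ≤ #S)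
    (hzero : ∀ i ∈ S, ∀ b ∈ Icc 1 m, ∀ a : Fin n → Fin s, c i b a = 0) :
    ∀ i : Fin n, ∀ b ∈ Icc 1 m, ∀ a : Fin n → Fin s, c i b a = 0 := by
  intro i b hb a
  by_cases hi : i ∈ S
  · exact hzero i hi b hb a
  have hinj : Set.InjOn (fun j => lam j (a j)) ↑Sᶜ := fun j _ j' _ hjj' =>
    congrArg Prod.fst (@hlam (j, a j) (j', a j') hjj')
  refine Finset.eq_zero_of_forall_sum_pow_mul_eq_zero (d := fun j => c j b a) hinj (fun t ht => ?_) i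
    (mem_compl.2 hi)
  have hsum : ∑ j ∈ S, lam j (a j) ^ t * c j b a = 0 :=
    sum_eq_zero fun j hj => by rw [hzero j hj b hb a, mul_zero]
  rw [card_compl, Fintype.card_fin] at ht
  rw [← hc t (by omega) b hb a, ← sum_add_sum_compl S, hsum, zero_add]

end IsCodeword

theorem stmt_1_general {F : Type*} [Field F] (n k s m : ℕ)
    (lam : Fin n → Fin s → F)
    (hlam : Function.Injective fun p : Fin n × Fin s => lam p.1 p.2)
    (c c' : Fin n → ℕ → (Fin n → Fin s) → F)
    (hc : IsCodeword k s m lam c) (hc' : IsCodeword k s m lam c')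
    (S : Finset (Fin n)) (hScard : S.card = k)
    (heq : ∀ i ∈ S, ∀ b ∈ Finset.Icc 1 m, ∀ a : Fin n → Fin s, c i b a = c' i b a) :
    ∀ i : Fin n, ∀ b ∈ Finset.Icc 1 m, ∀ a : Fin n → Fin s, c i b a = c' i b a := by
  intro i b hb a
  refine sub_eq_zero.1 ((hc.sub hc').eq_zero_of_eq_zero_on hlam hScard.ge ?_ i b hb a)
  exact fun j hj b hb a => sub_eq_zero.2 (heq j hj b hb a)

/-- `C(n,k,s,m,λ)` is an MDS array code: any two codewords agreeing
on `k` nodes are equal. -/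
theorem stmt_1 {F : Type*} [Field F] (n k s m : ℕ)
    (hk : 1 ≤ k) (hkn : k < n) (hs : 1 ≤ s) (hm : 1 ≤ m)
    (lam : Fin n → Fin s → F)
    (hlam : Function.Injective fun p : Fin n × Fin s => lam p.1 p.2)
    (c c' : Fin n → ℕ → (Fin n → Fin s) → F)
    (hc : IsCodeword k s m lam c) (hc' : IsCodeword k s m lam c')
    (S : Finset (Fin n)) (hScard : S.card = k)
    (heq : ∀ i ∈ S, ∀ b ∈ Finset.Icc 1 m, ∀ a : Fin n → Fin s, c i b a = c' i b a) :
    ∀ i : Fin n, ∀ b ∈ Finset.Icc 1 m, ∀ a : Fin n → Fin s, c i b a = c' i b a :=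
  stmt_1_general n k s m lam hlam c c' hc hc' S hScard heq
end

section
/- Assume k ≤ n − 3 and let λ : {1,…,n} × {0,1} → F be injective. Let 𝓕, 𝓡 ⊆ {1,…,n} be disjoint sets with |𝓕| = 2 and |𝓡| = k + 1. Then there exist: first-round download functions φ_{u,j} : N → M for each u ∈ 𝓕 and j ∈ 𝓡; exchange functions ψ_{u,v} : (𝓡 → M) → M for each ordered pair of distinct u, v ∈ 𝓕; and recovery functions ρ_u : (𝓡 → M) × ((𝓕∖{u}) → M) → N for each u ∈ 𝓕; such that for every codeword c of C(n,k,2,3,λ) and every u ∈ 𝓕, ρ_u( (j ↦ φ_{u,j}(c_j)), (v ↦ ψ_{v,u}(j ↦ φ_{v,j}(c_j))) ) = c_u, where c_i ∈ N denotes the i-th node (b,a) ↦ c(i,b,a). Since each of the 2(k+1) first-round messages and each of the 2 exchange messages consists of 2^n symbols of F, the total repair bandwidth is 2(k+2)·2^n symbols, which meets the cooperative cut-set bound |𝓕|(|𝓡|+|𝓕|−1)·l / (|𝓕|+|𝓡|−k) with equality for node size l = 3·2^n. -/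
open Finset Function

section
variable {F : Type*} [Field F] {n k : ℕ}

theorem eq_zero_of_sum_pow_mul_eq_zero_s5 {ι : Type*} [Fintype ι] {pt : ι → F}
    (hpt : Injective pt) {Z : ι → F} {K : Finset ι} (hZ : ∀ i ∉ K, Z i = 0) {r : ℕ}
    (hK : #K ≤ r) (h : ∀ t < r, ∑ i, pt i ^ t * Z i = 0) : Z = 0 := by
  let e := K.equivFin.symm
  have hv := Matrix.eq_zero_of_forall_pow_sum_mul_pow_eq_zero (f := fun j => pt (e j))
    (v := fun j => Z (e j)) (hpt.comp (Subtype.val_injective.comp e.injective)) fun t => by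
      rw [← h t (t.2.trans_le hK),
        ← sum_subset (subset_univ K) fun i _ hi => by rw [hZ i hi, mul_zero],
        ← sum_coe_sort K, ← e.sum_comp]
      simp [mul_comm]
  funext i
  by_cases hi : i ∈ K
  · simpa [e] using congrFun hv (e.symm ⟨i, hi⟩)
  · exact hZ i hi

theorem repair_of_sum_pow_mul_eq_zero {s : ℕ} {lam : Fin n → Fin s → F}
    (hlam : Injective fun p : Fin n × Fin s => lam p.1 p.2) {R : Finset (Fin n)} {x : Fin n}
    (hx : x ∉ R) (hR : k + s ≤ #R + 1) (a : Fin n → Fin s) (y : Fin s → Fin n → F)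
    (hy : ∀ ε, ∀ t < n - k, ∑ i, lam i (update a x ε i) ^ t * y ε i = 0)
    (hRy : ∀ j ∈ R, ∑ ε, y ε j = 0) :
    (∀ ε, y ε x = 0) ∧ ∀ i ≠ x, ∑ ε, y ε i = 0 := by
  -- The parity checks at the points `update a x ε`, summed over `ε`, are parity checks of `Z`
  -- with the distinct points `lam i e`, and `Z` has at most `n - k` nonzero entries.
  let Z : Fin n × Fin s → F := fun p =>
    if p.1 = x then y p.2 x else if p.2 = a p.1 then ∑ ε, y ε p.1 else 0
  let K := univ.image (x, ·) ∪ (insert x R)ᶜ.image fun i => (i, a i)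
  have hK : #K ≤ n - k := by
    have h₁ := card_union_le (univ.image (x, ·)) ((insert x R)ᶜ.image fun i => (i, a i))
    have h₂ := card_image_le (s := (univ : Finset (Fin s))) (f := (x, ·))
    have h₃ := card_image_le (s := (insert x R)ᶜ) (f := fun i => (i, a i))
    have h₄ := card_le_univ (insert x R)
    simp only [card_compl, card_insert_of_notMem hx, card_univ, Fintype.card_fin] at h₂ h₃ h₄
    exact h₁.trans (by omega)
  have hZ : ∀ p ∉ K, Z p = 0 := by
    rintro ⟨i, ε⟩ hp
    by_cases hi : i = x
    · subst hi; simp [K] at hp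
    by_cases hε : ε = a i
    · subst hε
      have hiR : i ∈ R := by_contra fun hiR =>
        hp (mem_union_right _ (mem_image.2 ⟨i, by simp [hi, hiR], rfl⟩))
      simp [Z, hi, hRy i hiR]
    · simp [Z, hi, hε]
  have hpar : ∀ t < n - k, ∑ p, lam p.1 p.2 ^ t * Z p = 0 := by
    intro t ht
    have h := sum_eq_zero (s := univ) fun ε _ => hy ε t ht
    rw [sum_comm] at h
    rw [Fintype.sum_prod_type, ← h]
    refine sum_congr rfl fun i _ => ?_
    by_cases hi : i = x
    · subst hi; simp [Z]
    · simp [Z, hi, mul_sum]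
  have h0 := eq_zero_of_sum_pow_mul_eq_zero_s5 hlam hZ hK hpar
  exact ⟨fun ε => by simpa [Z] using congrFun h0 (x, ε),
    fun i hi => by simpa [Z, hi] using congrFun h0 (i, a i)⟩

theorem IsCodeword.sub_s5 {s m : ℕ} {lam : Fin n → Fin s → F}
    {c c' : Fin n → ℕ → (Fin n → Fin s) → F} (hc : IsCodeword k s m lam c)
    (hc' : IsCodeword k s m lam c') : IsCodeword k s m lam (c - c') := fun t ht b hb a => by
  simp only [Pi.sub_apply, mul_sub, sum_sub_distrib, hc t ht b hb a, hc' t ht b hb a, sub_zero]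

theorem IsCodeword.sum_pow_mul_add_eq_zero {s m : ℕ} {lam : Fin n → Fin s → F}
    {d : Fin n → ℕ → (Fin n → Fin s) → F} (hd : IsCodeword k s m lam d) {p q : ℕ}
    (hp : p ∈ Icc 1 m) (hq : q ∈ Icc 1 m) (α β : F) (a : Fin n → Fin s) :
    ∀ t < n - k, ∑ i, lam i (a i) ^ t * (α * d i p a + β * d i q a) = 0 := fun t ht => by
  simp only [mul_add, sum_add_distrib, mul_left_comm _ α, mul_left_comm _ β, ← mul_sum,
    hd t ht p hp a, hd t ht q hq a, mul_zero, add_zero]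

def repairQuery {s : ℕ} (p q : ℕ) (w w' : Fin s → F) (x : Fin n)
    (cj : ℕ → (Fin n → Fin s) → F) (a : Fin n → Fin s) : F :=
  ∑ ε, (w ε * cj p (update a x ε) + w' ε * cj q (update a x ε))

theorem IsCodeword.repairQuery_eq_zero_of_helpers {s m : ℕ} {lam : Fin n → Fin s → F}
    (hlam : Injective fun p : Fin n × Fin s => lam p.1 p.2)
    {d : Fin n → ℕ → (Fin n → Fin s) → F} (hd : IsCodeword k s m lam d) {p q : ℕ}
    (hp : p ∈ Icc 1 m) (hq : q ∈ Icc 1 m) (w w' : Fin s → F) {R : Finset (Fin n)} {x : Fin n}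
    (hx : x ∉ R) (hR : k + s ≤ #R + 1) (a : Fin n → Fin s)
    (h : ∀ j ∈ R, repairQuery p q w w' x (d j) a = 0) :
    (∀ ε, w ε * d x p (update a x ε) + w' ε * d x q (update a x ε) = 0) ∧
      ∀ i ≠ x, repairQuery p q w w' x (d i) a = 0 :=
  repair_of_sum_pow_mul_eq_zero hlam hx hR a
    (fun ε i => w ε * d i p (update a x ε) + w' ε * d i q (update a x ε))
    (fun ε => hd.sum_pow_mul_add_eq_zero hp hq (w ε) (w' ε) (update a x ε)) h

/-- What a helper holding `cj` sends to the failed node `x`, which repairs the blocks `p` and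
`q` from the helpers. Writing `aᵉ = update a x ε`, the symbol at `a` is `c(p, a⁰) + c(p, a¹)` if
`a x = 0` and `c(p, a⁰) + c(q, a⁰) + c(q, a¹)` if `a x = 1`. -/
def repairMsg (p q : ℕ) (x : Fin n) (cj : ℕ → (Fin n → Fin 2) → F)
    (a : Fin n → Fin 2) : F :=
  if a x = 0 then repairQuery p q 1 0 x cj a else repairQuery p q (Pi.single 0 1) 1 x cj a

theorem repairMsg_sub_eq_zero {p q : ℕ} {x : Fin n} {f g : ℕ → (Fin n → Fin 2) → F} :
    repairMsg p q x (f - g) = 0 ↔ repairMsg p q x f = repairMsg p q x g := by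
  have : repairMsg p q x (f - g) = repairMsg p q x f - repairMsg p q x g := by
    funext a
    simp only [repairMsg, repairQuery, Pi.sub_apply, mul_sub]
    split_ifs <;> simp only [← sum_sub_distrib] <;> exact sum_congr rfl fun _ _ => by ring
  rw [this, sub_eq_zero]

theorem eq_zero_of_repairMsg_eq_zero {p q : ℕ} {y : Fin n}
    {cx : ℕ → (Fin n → Fin 2) → F} (hq : cx q = 0) (h : repairMsg p q y cx = 0) :
    cx p = 0 := by
  funext a
  have h₀ : cx p (update a y 0) = 0 := by
    simpa [repairMsg, repairQuery, Fin.sum_univ_two, hq] using congrFun h (update a y 1)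
  have h₁ : cx p (update a y 1) = 0 := by
    simpa [repairMsg, repairQuery, Fin.sum_univ_two, h₀] using congrFun h (update a y 0)
  rcases Fin.exists_fin_two.mp ⟨a y, rfl⟩ with hy | hy
  all_goals rw [← update_eq_self y a, hy]; assumption

section RepairMsg

variable {m : ℕ} {lam : Fin n → Fin 2 → F} {d : Fin n → ℕ → (Fin n → Fin 2) → F} {p q : ℕ}
  {R : Finset (Fin n)} {x : Fin n}

theorem IsCodeword.repairMsg_eq_zero_of_helpers
    (hlam : Injective fun p : Fin n × Fin 2 => lam p.1 p.2) (hd : IsCodeword k 2 m lam d)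
    (hp : p ∈ Icc 1 m) (hq : q ∈ Icc 1 m) (hx : x ∉ R) (hR : k + 1 ≤ #R)
    (h : ∀ j ∈ R, repairMsg p q x (d j) = 0) {i : Fin n} (hi : i ≠ x) :
    repairMsg p q x (d i) = 0 := by
  funext a
  have ha := fun j hj => congrFun (h j hj) a
  unfold repairMsg at ha ⊢
  split_ifs at ha ⊢ <;>
    exact (hd.repairQuery_eq_zero_of_helpers hlam hp hq _ _ hx (by omega) a ha).2 i hi

theorem IsCodeword.blocks_eq_zero_of_helpers
    (hlam : Injective fun p : Fin n × Fin 2 => lam p.1 p.2) (hd : IsCodeword k 2 m lam d)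
    (hp : p ∈ Icc 1 m) (hq : q ∈ Icc 1 m) (hx : x ∉ R) (hR : k + 1 ≤ #R)
    (h : ∀ j ∈ R, repairMsg p q x (d j) = 0) : d x p = 0 ∧ d x q = 0 := by
  have hpriv : d x p = 0 := funext fun a => by
    simpa using (hd.repairQuery_eq_zero_of_helpers hlam hp hq 1 0 hx (by omega) (update a x 0)
      fun j hj => by simpa [repairMsg] using congrFun (h j hj) (update a x 0)).1 (a x)
  refine ⟨hpriv, funext fun a => ?_⟩
  simpa [hpriv] using (hd.repairQuery_eq_zero_of_helpers hlam hp hq (Pi.single 0 1) 1 hx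
    (by omega) (update a x 1)
    fun j hj => by simpa [repairMsg] using congrFun (h j hj) (update a x 1)).1 (a x)

theorem IsCodeword.node_eq_zero_of_repairMsg_eq_zero
    (hlam : Injective fun p : Fin n × Fin 2 => lam p.1 p.2) (hd : IsCodeword k 2 m lam d)
    (hp : p ∈ Icc 1 m) (hq : q ∈ Icc 1 m) (hx : x ∉ R) (hR : k + 1 ≤ #R)
    (h : ∀ j ∈ R, repairMsg p q x (d j) = 0) {p' : ℕ} {y : Fin n}
    (hy : repairMsg p' q y (d x) = 0) : ∀ b ∈ ({p, q, p'} : Set ℕ), d x b = 0 := by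
  obtain ⟨hpriv, hshared⟩ := hd.blocks_eq_zero_of_helpers hlam hp hq hx hR h
  rintro b (rfl | rfl | rfl)
  exacts [hpriv, hshared, eq_zero_of_repairMsg_eq_zero hshared hy]

end RepairMsg

theorem exists_exchange {m : ℕ} {lam : Fin n → Fin 2 → F}
    (hlam : Injective fun p : Fin n × Fin 2 => lam p.1 p.2) {R : Finset (Fin n)}
    (hR : k + 1 ≤ #R) {blk : Fin n → ℕ} (hblk : ∀ x, blk x ∈ Icc 1 m) {q : ℕ}
    (hq : q ∈ Icc 1 m) :
    ∃ ψ : Fin n → Fin n → ({j // j ∈ R} → (Fin n → Fin 2) → F) → (Fin n → Fin 2) → F,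
      ∀ x ∉ R, ∀ y ≠ x, ∀ c, IsCodeword k 2 m lam c →
        ψ x y (fun j => repairMsg (blk x) q x (c j)) = repairMsg (blk x) q x (c y) := by
  let C := {c // IsCodeword k 2 m lam c}
  let D (x : Fin n) (c : C) (j : {j // j ∈ R}) := repairMsg (blk x) q x (c.1 j)
  refine ⟨fun x y => extend (D x) (fun c => repairMsg (blk x) q x (c.1 y)) 0,
    fun x hx y hy c hc => FactorsThrough.extend_apply (fun c c' h => ?_) _ (⟨c, hc⟩ : C)⟩
  exact repairMsg_sub_eq_zero.1 <| (c.2.sub_s5 c'.2).repairMsg_eq_zero_of_helpers hlam (hblk x) hq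
    hx hR (fun j hj => repairMsg_sub_eq_zero.2 (congrFun h ⟨j, hj⟩)) hy

theorem exists_recovery {m : ℕ} {lam : Fin n → Fin 2 → F}
    (hlam : Injective fun p : Fin n × Fin 2 => lam p.1 p.2) {R Fs : Finset (Fin n)}
    (hR : k + 1 ≤ #R) (hFR : Disjoint Fs R) {blk : Fin n → ℕ} (hblk : ∀ x, blk x ∈ Icc 1 m)
    {q : ℕ} (hq : q ∈ Icc 1 m)
    {ψ : Fin n → Fin n → ({j // j ∈ R} → (Fin n → Fin 2) → F) → (Fin n → Fin 2) → F}
    (hψ : ∀ x ∉ R, ∀ y ≠ x, ∀ c, IsCodeword k 2 m lam c →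
      ψ x y (fun j => repairMsg (blk x) q x (c j)) = repairMsg (blk x) q x (c y))
    (hcover : ∀ x ∈ Fs, ∃ y ∈ Fs.erase x, Set.Icc 1 m ⊆ {blk x, q, blk y}) :
    ∃ ρ : (x : Fin n) → ({j // j ∈ R} → (Fin n → Fin 2) → F) →
        ({w // w ∈ Fs.erase x} → (Fin n → Fin 2) → F) → ℕ → (Fin n → Fin 2) → F,
      ∀ c, IsCodeword k 2 m lam c → ∀ x ∈ Fs, ∀ b ∈ Icc 1 m, ∀ a,
        ρ x (fun j => repairMsg (blk x) q x (c j))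
          (fun w => ψ w x (fun j => repairMsg (blk w) q w (c j))) b a = c x b a := by
  let C := {c // IsCodeword k 2 m lam c}
  let D (x : Fin n) (c : C) (j : {j // j ∈ R}) := repairMsg (blk x) q x (c.1 j)
  let data (x : Fin n) (c : C) := (D x c, fun w : {w // w ∈ Fs.erase x} => ψ w x (D w c))
  -- the code does not constrain blocks outside `Icc 1 m`, so only those are decoded
  refine ⟨fun x D' E' => extend (data x) (fun c => (Set.Icc 1 m).indicator (c.1 x)) 0 (D', E'),
    fun c hc x hx b hb a => ?_⟩
  obtain ⟨y, hy, hcov⟩ := hcover x hx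
  have hdet : FactorsThrough (fun c : C => (Set.Icc 1 m).indicator (c.1 x)) (data x) := by
    intro c c' h
    obtain ⟨hD, hE⟩ := Prod.mk.inj h
    have hyR := disjoint_left.1 hFR (mem_of_mem_erase hy)
    have hpartner : repairMsg (blk y) q y (c.1 x) = repairMsg (blk y) q y (c'.1 x) := by
      rw [← hψ y hyR x (ne_of_mem_erase hy).symm c.1 c.2,
        ← hψ y hyR x (ne_of_mem_erase hy).symm c'.1 c'.2]
      exact congrFun hE ⟨y, hy⟩
    exact Set.indicator_congr fun b hb => sub_eq_zero.1 <|
      (c.2.sub_s5 c'.2).node_eq_zero_of_repairMsg_eq_zero hlam (hblk x) hq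
        (disjoint_left.1 hFR hx) hR (fun j hj => repairMsg_sub_eq_zero.2 (congrFun hD ⟨j, hj⟩))
        (repairMsg_sub_eq_zero.2 hpartner) b (hcov hb)
  have hρ := congrFun (congrFun (hdet.extend_apply 0 ⟨c, hc⟩) b) a
  rwa [Set.indicator_of_mem (Set.mem_Icc.2 (mem_Icc.1 hb))] at hρ

end

theorem stmt_5_general {F : Type*} [Field F] (n k : ℕ)
    (lam : Fin n → Fin 2 → F)
    (hlam : Function.Injective fun p : Fin n × Fin 2 => lam p.1 p.2)
    (Fs Rs : Finset (Fin n)) (hdisj : Disjoint Fs Rs)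
    (hFcard : Fs.card = 2) (hRcard : Rs.card = k + 1) :
    ∃ (φ : Fin n → Fin n → (ℕ → (Fin n → Fin 2) → F) → ((Fin n → Fin 2) → F))
      (ψ : Fin n → Fin n → ({j // j ∈ Rs} → (Fin n → Fin 2) → F) → ((Fin n → Fin 2) → F))
      (ρ : (u : Fin n) → ({j // j ∈ Rs} → (Fin n → Fin 2) → F) →
            ({v // v ∈ Fs.erase u} → (Fin n → Fin 2) → F) → (ℕ → (Fin n → Fin 2) → F)),
      ∀ c : Fin n → ℕ → (Fin n → Fin 2) → F, IsCodeword k 2 3 lam c →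
        ∀ u ∈ Fs, ∀ b ∈ Finset.Icc 1 3, ∀ a : Fin n → Fin 2,
          ρ u (fun j => φ u j.1 (c j.1))
              (fun v => ψ v.1 u (fun j => φ v.1 j.1 (c j.1))) b a
            = c u b a := by
  obtain ⟨u, v, huv, rfl⟩ := card_eq_two.mp hFcard
  let blk : Fin n → ℕ := fun x => if x = u then 1 else 3
  have hblk : ∀ x, blk x ∈ Icc 1 3 := fun x => by by_cases x = u <;> simp [blk, *]
  have hcover : ∀ x ∈ ({u, v} : Finset (Fin n)),
      ∃ y ∈ erase {u, v} x, Set.Icc 1 3 ⊆ {blk x, 2, blk y} := by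
    simp only [mem_insert, mem_singleton, forall_eq_or_imp, forall_eq]
    exact ⟨⟨v, by simp [huv.symm], fun b hb => by simp [blk, huv.symm] at hb ⊢; omega⟩,
      ⟨u, by simp [huv], fun b hb => by simp [blk, huv.symm] at hb ⊢; omega⟩⟩
  obtain ⟨ψ, hψ⟩ := exists_exchange hlam hRcard.ge hblk (q := 2) (by simp)
  obtain ⟨ρ, hρ⟩ := exists_recovery hlam hRcard.ge hdisj hblk (by simp) hψ hcover
  exact ⟨fun x _ => repairMsg (blk x) 2 x, ψ, ρ, hρ⟩

/-- `C(n,k,2,3,λ)` is a `(2,k+1)`-MSR code under the cooperative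
model.  For any two failed nodes `Fs` and any `k+1` helper nodes `Rs` there
exist first-round download functions `φ u j` (one message, i.e. one element of
`M = (Fin n → Fin 2) → F ≅ F^(2^n)`, sent from helper `j` to failed node `u`),
exchange functions `ψ u v` (one message of `M` computed by `u` from its
first-round downloads and sent to the other failed node `v`), and recovery
functions `ρ u`, such that every failed node recovers all of its coordinates
`(b,a)`, `b ∈ {1,2,3}`.  The total bandwidth, `2(k+1) + 2` messages of `2^n`
field symbols each, meets the cooperative cut-set bound with equality. -/
theorem stmt_5 {F : Type*} [Field F] (n k : ℕ) (hk : 1 ≤ k) (hkn : k + 3 ≤ n)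
    (lam : Fin n → Fin 2 → F)
    (hlam : Function.Injective fun p : Fin n × Fin 2 => lam p.1 p.2)
    (Fs Rs : Finset (Fin n)) (hdisj : Disjoint Fs Rs)
    (hFcard : Fs.card = 2) (hRcard : Rs.card = k + 1) :
    ∃ (φ : Fin n → Fin n → (ℕ → (Fin n → Fin 2) → F) → ((Fin n → Fin 2) → F))
      (ψ : Fin n → Fin n → ({j // j ∈ Rs} → (Fin n → Fin 2) → F) → ((Fin n → Fin 2) → F))
      (ρ : (u : Fin n) → ({j // j ∈ Rs} → (Fin n → Fin 2) → F) →
            ({v // v ∈ Fs.erase u} → (Fin n → Fin 2) → F) → (ℕ → (Fin n → Fin 2) → F)),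
      ∀ c : Fin n → ℕ → (Fin n → Fin 2) → F, IsCodeword k 2 3 lam c →
        ∀ u ∈ Fs, ∀ b ∈ Finset.Icc 1 3, ∀ a : Fin n → Fin 2,
          ρ u (fun j => φ u j.1 (c j.1))
              (fun v => ψ v.1 u (fun j => φ v.1 j.1 (c j.1))) b a
            = c u b a :=
  stmt_5_general n k lam hlam Fs Rs hdisj hFcard hRcard
end

section
/- Let s ≥ 1, assume k + s − 1 ≤ n − 2, and let λ : {1,…,n} × {0,…,s−1} → F be injective. For every codeword c of C(n,k,s,s+1,λ), every a ∈ {0,…,s−1}^n, and every t ∈ {0,…,n−k−1}, the following identity holds: ∑_{j=0}^{s−1} λ(1, a_1⊕j)^t · c(1, j+1, a(1, a_1⊕j)) + ∑_{i=2}^n λ(i,a_i)^t · ( ∑_{j=0}^{s−1} c(i, j+1, a(1, a_1⊕j)) ) = 0. -/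
open Fin.NatCast

/-- the key identity for the first round of the repair of node 1
(here `i1`, the node with index `0` in `Fin n`) in the code `C(n,k,s,s+1,λ)`
with `s ≥ 1` (expressed by `[NeZero s]`) and `d := k+s-1 ≤ n-2`
(expressed by `k + s + 1 ≤ n`).  Addition on `Fin s` is addition modulo `s`,
so `a i1 + (j : Fin s)` is `a₁ ⊕ j` and
`Function.update a i1 (a i1 + (j : Fin s))` is `a(1, a₁ ⊕ j)`. -/
theorem stmt_6 {F : Type*} [Field F] (n k s : ℕ) [NeZero s]
    (hk : 1 ≤ k) (hkn : k + s + 1 ≤ n)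
    (lam : Fin n → Fin s → F)
    (hlam : Function.Injective fun p : Fin n × Fin s => lam p.1 p.2)
    (c : Fin n → ℕ → (Fin n → Fin s) → F)
    (hc : IsCodeword k s (s + 1) lam c)
    (i1 : Fin n) (hi1 : (i1 : ℕ) = 0)
    (a : Fin n → Fin s) (t : ℕ) (ht : t < n - k) :
    ∑ j ∈ Finset.range s,
        lam i1 (a i1 + (j : Fin s)) ^ t
          * c i1 (j + 1) (Function.update a i1 (a i1 + (j : Fin s)))
      + ∑ i ∈ Finset.univ.erase i1,
          lam i (a i) ^ t
            * ∑ j ∈ Finset.range s, c i (j + 1) (Function.update a i1 (a i1 + (j : Fin s)))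
      = 0 := by
  have key : ∀ j ∈ Finset.range s,
      lam i1 (a i1 + (j : Fin s)) ^ t
          * c i1 (j + 1) (Function.update a i1 (a i1 + (j : Fin s)))
        + ∑ i ∈ Finset.univ.erase i1, lam i (a i) ^ t
            * c i (j + 1) (Function.update a i1 (a i1 + (j : Fin s))) = 0 := by
    intro j hj
    have hj' := Finset.mem_range.mp hj
    have h := hc t ht (j + 1) (Finset.mem_Icc.mpr ⟨by omega, by omega⟩)
      (Function.update a i1 (a i1 + (j : Fin s)))
    rw [← Finset.add_sum_erase _ _ (Finset.mem_univ i1)] at h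
    rw [show (Function.update a i1 (a i1 + (j : Fin s))) i1 = a i1 + (j : Fin s) from
      Function.update_self _ _ _] at h
    rw [Finset.sum_congr rfl (fun i hi => by
      rw [Function.update_of_ne (Finset.mem_erase.mp hi).1])] at h
    exact h
  calc ∑ j ∈ Finset.range s,
        lam i1 (a i1 + (j : Fin s)) ^ t
          * c i1 (j + 1) (Function.update a i1 (a i1 + (j : Fin s)))
      + ∑ i ∈ Finset.univ.erase i1,
          lam i (a i) ^ t
            * ∑ j ∈ Finset.range s, c i (j + 1) (Function.update a i1 (a i1 + (j : Fin s)))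
      = ∑ j ∈ Finset.range s,
          (lam i1 (a i1 + (j : Fin s)) ^ t
            * c i1 (j + 1) (Function.update a i1 (a i1 + (j : Fin s)))
          + ∑ i ∈ Finset.univ.erase i1, lam i (a i) ^ t
              * c i (j + 1) (Function.update a i1 (a i1 + (j : Fin s)))) := by
        rw [Finset.sum_add_distrib]
        congr 1
        rw [Finset.sum_comm]
        exact Finset.sum_congr rfl fun i _ => Finset.mul_sum _ _ _
    _ = 0 := Finset.sum_eq_zero key
end

section
/- Let s ≥ 1, set d := k + s − 1, assume d ≤ n − 2, and let λ : {1,…,n} × {0,…,s−1} → F be injective. Let R ⊆ {3,…,n} be a set with |R| = d. If c and c' are codewords of C(n,k,s,s+1,λ) such that ∑_{j=0}^{s−2} c(i, j+1, a(1, a_1⊕j)) + c(i, s, a(1, a_1⊕(s−1))) = ∑_{j=0}^{s−2} c'(i, j+1, a(1, a_1⊕j)) + c'(i, s, a(1, a_1⊕(s−1))) for every i ∈ R and every a ∈ {0,…,s−1}^n, then: (1) c(1,b,a) = c'(1,b,a) for every b ∈ {1,…,s} and every a, and (2) ∑_{j=0}^{s−2} c(2, j+1, a(1, a_1⊕j))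 + c(2, s, a(1, a_1⊕(s−1))) = ∑_{j=0}^{s−2} c'(2, j+1, a(1, a_1⊕j)) + c'(2, s, a(1, a_1⊕(s−1))) for every a. -/
open Fin.NatCast in
/-- The sum `∑_{j=0}^{s-2} c(i, j+1, a(w, a_w ⊕ j)) + c(i, bLast, a(w, a_w ⊕ (s-1)))`,
where `w` is the failed node whose digit is rotated, `bLast` the distinguished
block index and `⊕` is addition modulo `s` (`Fin s` addition). -/
def repairSum {F : Type*} [Field F] {n s : ℕ} [NeZero s]
    (c : Fin n → ℕ → (Fin n → Fin s) → F) (w : Fin n) (bLast : ℕ)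
    (i : Fin n) (a : Fin n → Fin s) : F :=
  ∑ j ∈ Finset.range (s - 1), c i (j + 1) (Function.update a w (a w + (j : Fin s)))
    + c i bLast (Function.update a w (a w + ((s - 1 : ℕ) : Fin s)))

open Polynomial Finset

lemma vand_zero {F : Type*} [Field F] {ι : Type*} [DecidableEq ι] (U : Finset ι)
    (μ y : ι → F) (N : ℕ) (hcard : U.card ≤ N)
    (hinj : Set.InjOn μ U)
    (h : ∀ t < N, ∑ u ∈ U, μ u ^ t * y u = 0) :
    ∀ u ∈ U, y u = 0 := by
  intro u hu
  set q : Polynomial F := ∏ v ∈ U.erase u, (X - C (μ v)) with hq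
  have hdeg : q.natDegree < N := by
    have h1 : q.natDegree = (U.erase u).card := by
      rw [hq, Polynomial.natDegree_prod_of_monic _ _ (fun v _ => monic_X_sub_C _)]
      simp
    have h2 := Finset.card_erase_of_mem hu
    have h3 : 0 < U.card := Finset.card_pos.mpr ⟨u, hu⟩
    omega
  have key : ∑ v ∈ U, q.eval (μ v) * y v = 0 := by
    calc ∑ v ∈ U, q.eval (μ v) * y v
        = ∑ v ∈ U, (∑ t ∈ Finset.range N, q.coeff t * μ v ^ t) * y v := by
          refine Finset.sum_congr rfl fun v _ => ?_
          rw [Polynomial.eval_eq_sum_range' hdeg]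
      _ = ∑ t ∈ Finset.range N, q.coeff t * ∑ v ∈ U, μ v ^ t * y v := by
          simp_rw [Finset.sum_mul, Finset.mul_sum, mul_assoc]
          rw [Finset.sum_comm]
      _ = 0 := by
          refine Finset.sum_eq_zero fun t ht => ?_
          rw [h t (Finset.mem_range.mp ht), mul_zero]
  have hsingle : ∑ v ∈ U, q.eval (μ v) * y v = q.eval (μ u) * y u := by
    refine Finset.sum_eq_single_of_mem u hu fun v hv hvu => ?_
    have : q.eval (μ v) = 0 := by
      rw [hq, Polynomial.eval_prod]
      exact Finset.prod_eq_zero (Finset.mem_erase.mpr ⟨hvu, hv⟩) (by simp)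
    rw [this, zero_mul]
  have hne : q.eval (μ u) ≠ 0 := by
    rw [hq, Polynomial.eval_prod]
    refine Finset.prod_ne_zero_iff.mpr fun v hv => ?_
    simp only [eval_sub, eval_X, eval_C, sub_ne_zero]
    exact fun hc => (Finset.mem_erase.mp hv).1 (hinj (Finset.mem_erase.mp hv).2 hu hc.symm)
  rw [hsingle] at key
  exact (mul_eq_zero.mp key).resolve_left hne

open Fin.NatCast in
lemma repairSum_eq {F : Type*} [Field F] {n s : ℕ} [NeZero s]
    (c : Fin n → ℕ → (Fin n → Fin s) → F) (w : Fin n) (i : Fin n) (a : Fin n → Fin s) :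
    repairSum c w s i a
      = ∑ j ∈ Finset.range s, c i (j + 1) (Function.update a w (a w + (j : Fin s))) := by
  have hs : s - 1 + 1 = s := Nat.succ_pred_eq_of_pos (NeZero.pos s)
  have h := Finset.sum_range_succ
    (fun j => c i (j + 1) (Function.update a w (a w + (j : Fin s)))) (s - 1)
  rw [hs] at h
  rw [h, repairSum]

lemma repairSum_sub {F : Type*} [Field F] {n s : ℕ} [NeZero s]
    (c c' : Fin n → ℕ → (Fin n → Fin s) → F) (w : Fin n) (bL : ℕ) (i : Fin n)
    (a : Fin n → Fin s) :
    repairSum (fun i b a => c i b a - c' i b a) w bL i a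
      = repairSum c w bL i a - repairSum c' w bL i a := by
  simp [repairSum, Finset.sum_sub_distrib]
  ring

/-- first-round recovery at node 1 in `C(n,k,s,s+1,λ)`, `s ≥ 1`,
`d := k+s-1 ≤ n-2` (expressed by `k + s + 1 ≤ n`).  Nodes 1 and 2 of the paper
are `i1, i2 : Fin n` with indices `0, 1`; the helper set `R ⊆ {3,…,n}` consists
of nodes with index `≥ 2` and `|R| = d`.  If the downloaded sums
`∑_{j=0}^{s-2} c(i,j+1,a(1,a₁⊕j)) + c(i,s,a(1,a₁⊕(s-1)))` for `i ∈ R` agree for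
two codewords, then (1) the coordinates `(1,b,a)`, `b ∈ {1,…,s}`, agree, and
(2) the corresponding sums at node 2 agree. -/
theorem stmt_7 {F : Type*} [Field F] (n k s : ℕ) [NeZero s]
    (hk : 1 ≤ k) (hkn : k + s + 1 ≤ n)
    (lam : Fin n → Fin s → F)
    (hlam : Function.Injective fun p : Fin n × Fin s => lam p.1 p.2)
    (i1 i2 : Fin n) (hi1 : (i1 : ℕ) = 0) (hi2 : (i2 : ℕ) = 1)
    (R : Finset (Fin n)) (hR : ∀ i ∈ R, 2 ≤ (i : ℕ)) (hRcard : R.card = k + s - 1)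
    (c c' : Fin n → ℕ → (Fin n → Fin s) → F)
    (hc : IsCodeword k s (s + 1) lam c) (hc' : IsCodeword k s (s + 1) lam c')
    (heq : ∀ i ∈ R, ∀ a : Fin n → Fin s,
      repairSum c i1 s i a = repairSum c' i1 s i a) :
    (∀ b ∈ Finset.Icc 1 s, ∀ a : Fin n → Fin s, c i1 b a = c' i1 b a) ∧
    (∀ a : Fin n → Fin s, repairSum c i1 s i2 a = repairSum c' i1 s i2 a) := by
  classical
  set e : Fin n → ℕ → (Fin n → Fin s) → F := fun i b a => c i b a - c' i b a with he_def
  have he : IsCodeword k s (s + 1) lam e := by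
    intro t ht b hb a
    have h1 := hc t ht b hb a
    have h2 := hc' t ht b hb a
    simp only [he_def, mul_sub, Finset.sum_sub_distrib, h1, h2, sub_zero]
  have heq0 : ∀ i ∈ R, ∀ a, repairSum e i1 s i a = 0 := by
    intro i hi a
    rw [he_def, repairSum_sub, heq i hi a, sub_self]
  have hi1R : i1 ∉ R := fun h => by have := hR i1 h; omega
  have hi2R : i2 ∉ R := fun h => by have := hR i2 h; omega
  have hi21 : i2 ≠ i1 := fun h => by rw [h, hi1] at hi2; omega
  -- the main Vandermonde argument, for a fixed `a`
  have main : ∀ a : Fin n → Fin s,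
      (∀ j : Fin s, e i1 ((j : ℕ) + 1) (Function.update a i1 (a i1 + j)) = 0) ∧
      (∀ i : Fin n, i ∉ R → i ≠ i1 → repairSum e i1 s i a = 0) := by
    intro a
    set μ : Fin n ⊕ Fin s → F :=
      Sum.elim (fun i => lam i (a i)) (fun j => lam i1 (a i1 + j)) with hμ
    set y : Fin n ⊕ Fin s → F :=
      Sum.elim (fun i => repairSum e i1 s i a)
        (fun j => e i1 ((j : ℕ) + 1) (Function.update a i1 (a i1 + j))) with hy
    set U : Finset (Fin n ⊕ Fin s) :=
      ((Finset.univ \ insert i1 R).image Sum.inl)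
        ∪ ((Finset.univ : Finset (Fin s)).image Sum.inr) with hU
    have hdisj : Disjoint ((Finset.univ \ insert i1 R).image Sum.inl)
        ((Finset.univ : Finset (Fin s)).image Sum.inr) := by
      simp [Finset.disjoint_left]
    have hcard : U.card ≤ n - k := by
      rw [hU, Finset.card_union_of_disjoint hdisj,
        Finset.card_image_of_injective _ Sum.inl_injective,
        Finset.card_image_of_injective _ Sum.inr_injective,
        Finset.card_sdiff_of_subset (Finset.subset_univ _),
        Finset.card_insert_of_notMem hi1R, hRcard]
      simp only [Finset.card_univ, Fintype.card_fin]
      omega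
    have hinj : Set.InjOn μ U := by
      intro u hu v hv huv
      have memU : ∀ w : Fin n, Sum.inl w ∈ U → w ≠ i1 ∧ w ∉ R := by
        intro w hw
        simp only [hU, Finset.mem_union, Finset.mem_image, Finset.mem_sdiff,
          Finset.mem_univ, true_and, Finset.mem_insert] at hw
        rcases hw with ⟨x, hx, hxe⟩ | ⟨x, hxe⟩
        · obtain rfl : x = w := Sum.inl.inj hxe
          exact ⟨fun h => hx (Or.inl h), fun h => hx (Or.inr h)⟩
        · simp at hxe
      cases u with
      | inl i =>
        cases v with
        | inl i' =>
          have := hlam (show (fun p : Fin n × Fin s => lam p.1 p.2) (i, a i)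
            = (fun p : Fin n × Fin s => lam p.1 p.2) (i', a i') from huv)
          simp only [Prod.mk.injEq] at this
          rw [this.1]
        | inr j =>
          have := hlam (show (fun p : Fin n × Fin s => lam p.1 p.2) (i, a i)
            = (fun p : Fin n × Fin s => lam p.1 p.2) (i1, a i1 + j) from huv)
          simp only [Prod.mk.injEq] at this
          exact absurd this.1 (memU i hu).1
      | inr j =>
        cases v with
        | inl i' =>
          have := hlam (show (fun p : Fin n × Fin s => lam p.1 p.2) (i1, a i1 + j)
            = (fun p : Fin n × Fin s => lam p.1 p.2) (i', a i') from huv)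
          simp only [Prod.mk.injEq] at this
          exact absurd this.1.symm (memU i' hv).1
        | inr j' =>
          have := hlam (show (fun p : Fin n × Fin s => lam p.1 p.2) (i1, a i1 + j)
            = (fun p : Fin n × Fin s => lam p.1 p.2) (i1, a i1 + j') from huv)
          simp only [Prod.mk.injEq] at this
          rw [add_left_cancel this.2]
    have hsys : ∀ t < n - k, ∑ u ∈ U, μ u ^ t * y u = 0 := by
      intro t ht
      have hpar : ∀ j : Fin s,
          ∑ i, lam i (Function.update a i1 (a i1 + j) i) ^ t
            * e i ((j : ℕ) + 1) (Function.update a i1 (a i1 + j)) = 0 := by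
        intro j
        refine he t ht ((j : ℕ) + 1) ?_ _
        have := j.isLt
        simp only [Finset.mem_Icc]
        omega
      have hsum : ∑ i, ∑ j : Fin s,
          lam i (Function.update a i1 (a i1 + j) i) ^ t
            * e i ((j : ℕ) + 1) (Function.update a i1 (a i1 + j)) = 0 := by
        rw [Finset.sum_comm]
        exact Finset.sum_eq_zero fun j _ => hpar j
      rw [Fintype.sum_eq_add_sum_compl i1] at hsum
      -- inner sum at i1
      have hin1 : ∑ j : Fin s,
          lam i1 (Function.update a i1 (a i1 + j) i1) ^ t
            * e i1 ((j : ℕ) + 1) (Function.update a i1 (a i1 + j))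
          = ∑ j : Fin s, lam i1 (a i1 + j) ^ t
              * e i1 ((j : ℕ) + 1) (Function.update a i1 (a i1 + j)) := by
        refine Finset.sum_congr rfl fun j _ => ?_
        rw [Function.update_self]
      -- inner sums away from i1
      have hin2 : ∀ i : Fin n, i ≠ i1 → ∑ j : Fin s,
          lam i (Function.update a i1 (a i1 + j) i) ^ t
            * e i ((j : ℕ) + 1) (Function.update a i1 (a i1 + j))
          = lam i (a i) ^ t * repairSum e i1 s i a := by
        intro i hi
        open Fin.NatCast in rw [repairSum_eq, Finset.mul_sum, ← Fin.sum_univ_eq_sum_range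
          (fun j => lam i (a i) ^ t * e i (j + 1) (Function.update a i1 (a i1 + (j : Fin s))))]
        refine Finset.sum_congr rfl fun j _ => ?_
        rw [Function.update_of_ne hi, Fin.cast_val_eq_self]
      rw [Finset.sum_congr rfl (fun i hi => hin2 i (by
            simpa using (Finset.mem_compl.mp hi)))] at hsum
      -- split the compl sum over R and its complement
      have hsplit : ({i1}ᶜ : Finset (Fin n)) = R ∪ (Finset.univ \ insert i1 R) := by
        ext i
        simp only [Finset.mem_compl, Finset.mem_singleton, Finset.mem_union,
          Finset.mem_sdiff, Finset.mem_univ, true_and, Finset.mem_insert]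
        constructor
        · intro h
          by_cases hiR : i ∈ R
          · exact Or.inl hiR
          · exact Or.inr (by tauto)
        · rintro (h | h)
          · exact fun hh => hi1R (hh ▸ h)
          · tauto
      have hdisj2 : Disjoint R (Finset.univ \ insert i1 R) := by
        simp only [Finset.disjoint_left, Finset.mem_sdiff, Finset.mem_univ, true_and,
          Finset.mem_insert]
        tauto
      rw [hsplit, Finset.sum_union hdisj2] at hsum
      have hRzero : ∑ i ∈ R, lam i (a i) ^ t * repairSum e i1 s i a = 0 :=
        Finset.sum_eq_zero fun i hi => by rw [heq0 i hi a, mul_zero]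
      rw [hRzero, zero_add, hin1] at hsum
      -- now assemble the U-sum
      rw [hU, Finset.sum_union hdisj, Finset.sum_image (fun x _ y _ h => Sum.inl_injective h),
        Finset.sum_image (fun x _ y _ h => Sum.inr_injective h)]
      simp only [hμ, hy, Sum.elim_inl, Sum.elim_inr]
      rw [add_comm]
      exact hsum
    have hz := vand_zero U μ y (n - k) hcard hinj hsys
    constructor
    · intro j
      exact hz (Sum.inr j) (by simp [hU])
    · intro i hiR hii1
      exact hz (Sum.inl i) (by simp [hU, hiR, hii1])
  refine ⟨?_, ?_⟩
  · intro b hb a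
    rw [Finset.mem_Icc] at hb
    have hb1 : b - 1 < s := by omega
    set j : Fin s := ⟨b - 1, hb1⟩ with hj
    have h0 := (main (Function.update a i1 (a i1 - j))).1 j
    rw [Function.update_self, sub_add_cancel, Function.update_idem,
      Function.update_eq_self] at h0
    have hjb : (j : ℕ) + 1 = b := by simp [hj]; omega
    rw [hjb] at h0
    exact sub_eq_zero.mp h0
  · intro a
    have h0 := (main a).2 i2 hi2R hi21
    rw [he_def, repairSum_sub] at h0
    exact sub_eq_zero.mp h0
end

section
/- Let s ≥ 1, set d := k + s − 1, assume d ≤ n − 2, and let λ : {1,…,n} × {0,…,s−1} → F be injective. Let R ⊆ {3,…,n} be a set with |R| = d. If c and c' are codewords of C(n,k,s,s+1,λ) such that ∑_{j=0}^{s−2} c(i, j+1, a(2, a_2⊕j)) + c(i, s+1, a(2, a_2⊕(s−1))) = ∑_{j=0}^{s−2} c'(i, j+1, a(2, a_2⊕j)) + c'(i, s+1, a(2, a_2⊕(s−1))) for every i ∈ R and every a ∈ {0,…,s−1}^n, then: (1) c(2,b,a) = c'(2,b,a) for every b ∈ {1,…,s−1} ∪ {s+1} and every a, and (2) ∑_{j=0}^{s−2}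 c(1, j+1, a(2, a_2⊕j)) + c(1, s+1, a(2, a_2⊕(s−1))) = ∑_{j=0}^{s−2} c'(1, j+1, a(2, a_2⊕j)) + c'(1, s+1, a(2, a_2⊕(s−1))) for every a. -/
lemma vdm_zero {F : Type*} [Field F] {ι : Type*} [Fintype ι] (μ : ι → F)
    (hμ : Function.Injective μ) (x : ι → F)
    (h : ∀ t < Fintype.card ι, ∑ i, μ i ^ t * x i = 0) : ∀ i, x i = 0 := by
  let e := Fintype.equivFin ι
  have hz : (fun j => x (e.symm j)) = 0 := by
    apply Matrix.eq_zero_of_forall_pow_sum_mul_pow_eq_zero (f := μ ∘ e.symm)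
      (hμ.comp e.symm.injective)
    intro t
    have ht := h t t.isLt
    rw [← Equiv.sum_comp e.symm (fun i => μ i ^ (t:ℕ) * x i)] at ht
    simpa [mul_comm] using ht
  intro i
  have := congrFun hz (e i)
  simpa using this

open Fin.NatCast in
lemma core_lemma {F : Type*} [Field F] {n k s : ℕ} [NeZero s]
    (hkn : k + s + 1 ≤ n)
    (lam : Fin n → Fin s → F)
    (hlam : Function.Injective fun p : Fin n × Fin s => lam p.1 p.2)
    (i2 : Fin n) (R : Finset (Fin n)) (hi2R : i2 ∉ R) (hRcard : R.card = k + s - 1)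
    (e : Fin n → ℕ → (Fin n → Fin s) → F)
    (hcode : ∀ t < n - k, ∀ b ∈ Finset.Icc 1 (s+1), ∀ a : Fin n → Fin s,
      ∑ i, lam i (a i) ^ t * e i b a = 0)
    (hR0 : ∀ i ∈ R, ∀ a : Fin n → Fin s, repairSum e i2 (s+1) i a = 0)
    (a : Fin n → Fin s) :
    (∀ j : Fin s, ((j:ℕ) ≠ s - 1 → e i2 ((j:ℕ)+1) (Function.update a i2 (a i2 + j)) = 0)
       ∧ ((j:ℕ) = s - 1 → e i2 (s+1) (Function.update a i2 (a i2 + j)) = 0))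
    ∧ (∀ i : Fin n, i ∉ R → i ≠ i2 → repairSum e i2 (s+1) i a = 0) := by
  classical
  have hs : 1 ≤ s := NeZero.one_le
  set S : Finset (Fin n) := Finset.univ \ insert i2 R with hS
  set u : ℕ → (Fin n → Fin s) := fun j => Function.update a i2 (a i2 + (j : Fin s)) with hu
  set X : ℕ → F := fun j => if j = s - 1 then e i2 (s+1) (u j) else e i2 (j+1) (u j) with hX
  set μ : ↥S ⊕ Fin s → F :=
    Sum.elim (fun i => lam i (a i)) (fun j => lam i2 (a i2 + j)) with hμdef
  set x : ↥S ⊕ Fin s → F :=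
    Sum.elim (fun i => repairSum e i2 (s+1) i a) (fun j => X (j : ℕ)) with hxdef
  have hScard : S.card = n - (k + s) := by
    rw [hS, Finset.card_sdiff_of_subset (Finset.subset_univ _), Finset.card_insert_of_notMem hi2R,
      Finset.card_univ, Fintype.card_fin, hRcard]
    omega
  have hcard : Fintype.card (↥S ⊕ Fin s) = n - k := by
    rw [Fintype.card_sum, Fintype.card_coe, Fintype.card_fin, hScard]; omega
  have hμ : Function.Injective μ := by
    rintro (⟨i, hi⟩ | j) (⟨i', hi'⟩ | j') h
    · have := hlam (a₁ := (i, a i)) (a₂ := (i', a i')) h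
      simp only [Prod.mk.injEq] at this
      exact congrArg Sum.inl (Subtype.ext this.1)
    · exfalso
      have := hlam (a₁ := (i, a i)) (a₂ := (i2, a i2 + j')) h
      simp only [Prod.mk.injEq] at this
      simp [hS, this.1] at hi
    · exfalso
      have := hlam (a₁ := (i2, a i2 + j)) (a₂ := (i', a i')) h
      simp only [Prod.mk.injEq] at this
      simp [hS, ← this.1] at hi'
    · have := hlam (a₁ := (i2, a i2 + j)) (a₂ := (i2, a i2 + j')) h
      simp only [Prod.mk.injEq] at this
      exact congrArg Sum.inr (add_left_cancel this.2)
  have key : ∀ t < n - k, ∑ p, μ p ^ t * x p = 0 := by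
    intro t ht
    set Φ : Fin n → F := fun i =>
      (∑ j ∈ Finset.range (s-1), lam i (u j i) ^ t * e i (j+1) (u j))
        + lam i (u (s-1) i) ^ t * e i (s+1) (u (s-1)) with hΦ
    have total : ∑ i, Φ i = 0 := by
      rw [hΦ, Finset.sum_add_distrib, Finset.sum_comm]
      have h1 : ∀ j ∈ Finset.range (s-1),
          ∑ i, lam i (u j i) ^ t * e i (j+1) (u j) = 0 := by
        intro j hj
        simp only [Finset.mem_range] at hj
        exact hcode t ht (j+1) (by simp; omega) (u j)
      have h2 : ∑ i, lam i (u (s-1) i) ^ t * e i (s+1) (u (s-1)) = 0 :=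
        hcode t ht (s+1) (by simp) (u (s-1))
      rw [Finset.sum_congr rfl h1, h2]
      simp
    have stepA : ∀ i : Fin n, i ≠ i2 →
        Φ i = lam i (a i) ^ t * repairSum e i2 (s+1) i a := by
      intro i hi
      have hui : ∀ j : ℕ, u j i = a i := fun j => Function.update_of_ne hi _ a
      simp only [hΦ, hui]
      rw [repairSum, mul_add, Finset.mul_sum]
    have stepB : Φ i2 = ∑ j : Fin s, μ (Sum.inr j) ^ t * x (Sum.inr j) := by
      have hui2 : ∀ j : ℕ, u j i2 = a i2 + (j : Fin s) :=
        fun j => Function.update_self _ _ _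
      have hterm : ∀ j : Fin s, μ (Sum.inr j) ^ t * x (Sum.inr j)
          = (fun jn : ℕ => lam i2 (a i2 + (jn : Fin s)) ^ t * X jn) (j : ℕ) := by
        intro j
        simp [hμdef, hxdef, Fin.cast_val_eq_self]
      rw [Finset.sum_congr rfl (fun j _ => hterm j),
        Fin.sum_univ_eq_sum_range (fun jn => lam i2 (a i2 + (jn : Fin s)) ^ t * X jn) s]
      obtain ⟨s', rfl⟩ : ∃ s', s = s' + 1 := ⟨s - 1, by omega⟩
      rw [Finset.sum_range_succ]
      simp only [Nat.add_sub_cancel, hΦ]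
      congr 1
      · apply Finset.sum_congr rfl
        intro j hj
        simp only [Finset.mem_range] at hj
        rw [hui2, hX]
        simp only []
        rw [if_neg (by omega)]
      · rw [hui2, hX]
        simp only []
        rw [if_pos (show s' = s' + 1 - 1 by omega)]
    have hRzero : ∑ i ∈ insert i2 R, Φ i = Φ i2 := by
      rw [Finset.sum_insert hi2R, Finset.sum_eq_zero, add_zero]
      intro i hi
      rw [stepA i (fun h => hi2R (h ▸ hi)), hR0 i hi a, mul_zero]
    have split : ∑ i ∈ S, Φ i + ∑ i ∈ insert i2 R, Φ i = ∑ i, Φ i :=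
      Finset.sum_sdiff (Finset.subset_univ _)
    calc ∑ p, μ p ^ t * x p
        = ∑ i ∈ S, Φ i + ∑ j : Fin s, μ (Sum.inr j) ^ t * x (Sum.inr j) := by
          rw [Fintype.sum_sum_type]
          congr 1
          rw [← Finset.sum_coe_sort S Φ]
          apply Finset.sum_congr rfl
          intro i _
          have hiS : (i : Fin n) ∈ S := i.2
          have hine : (i : Fin n) ≠ i2 := by
            simp only [hS, Finset.mem_sdiff, Finset.mem_insert] at hiS
            exact fun h => hiS.2 (Or.inl h)
          rw [stepA i hine]
          simp [hμdef, hxdef]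
      _ = ∑ i ∈ S, Φ i + Φ i2 := by rw [stepB]
      _ = ∑ i, Φ i := by rw [← hRzero, split]
      _ = 0 := total
  have hzero := vdm_zero μ hμ x (by rw [hcard]; exact key)
  constructor
  · intro j
    have hz := hzero (Sum.inr j)
    simp only [hxdef, Sum.elim_inr, hX, hu, Fin.cast_val_eq_self] at hz
    constructor
    · intro hj
      rwa [if_neg hj] at hz
    · intro hj
      rwa [if_pos hj] at hz
  · intro i hiR hii2
    have hiS : i ∈ S := by simp [hS, hiR, hii2]
    have := hzero (Sum.inl ⟨i, hiS⟩)
    simpa [hxdef] using this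


/-- first-round recovery at node 2 in `C(n,k,s,s+1,λ)`, `s ≥ 1`,
`d := k+s-1 ≤ n-2` (expressed by `k + s + 1 ≤ n`).  Nodes 1 and 2 of the paper
are `i1, i2 : Fin n` with indices `0, 1`; the helper set `R ⊆ {3,…,n}` consists
of nodes with index `≥ 2` and `|R| = d`.  If the downloaded sums
`∑_{j=0}^{s-2} c(i,j+1,a(2,a₂⊕j)) + c(i,s+1,a(2,a₂⊕(s-1)))` for `i ∈ R` agree
for two codewords, then (1) the coordinates `(2,b,a)`, `b ∈ {1,…,s-1} ∪ {s+1}`,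
agree, and (2) the corresponding sums at node 1 agree. -/
theorem stmt_8 {F : Type*} [Field F] (n k s : ℕ) [NeZero s]
    (hk : 1 ≤ k) (hkn : k + s + 1 ≤ n)
    (lam : Fin n → Fin s → F)
    (hlam : Function.Injective fun p : Fin n × Fin s => lam p.1 p.2)
    (i1 i2 : Fin n) (hi1 : (i1 : ℕ) = 0) (hi2 : (i2 : ℕ) = 1)
    (R : Finset (Fin n)) (hR : ∀ i ∈ R, 2 ≤ (i : ℕ)) (hRcard : R.card = k + s - 1)
    (c c' : Fin n → ℕ → (Fin n → Fin s) → F)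
    (hc : IsCodeword k s (s + 1) lam c) (hc' : IsCodeword k s (s + 1) lam c')
    (heq : ∀ i ∈ R, ∀ a : Fin n → Fin s,
      repairSum c i2 (s + 1) i a = repairSum c' i2 (s + 1) i a) :
    (∀ b ∈ Finset.Icc 1 (s - 1) ∪ {s + 1}, ∀ a : Fin n → Fin s,
      c i2 b a = c' i2 b a) ∧
    (∀ a : Fin n → Fin s, repairSum c i2 (s + 1) i1 a = repairSum c' i2 (s + 1) i1 a) := by
  classical
  have hs : 1 ≤ s := NeZero.one_le
  set e : Fin n → ℕ → (Fin n → Fin s) → F := fun i b a => c i b a - c' i b a with he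
  have hi2R : i2 ∉ R := fun h => by have := hR i2 h; omega
  have hcode : ∀ t < n - k, ∀ b ∈ Finset.Icc 1 (s+1), ∀ a : Fin n → Fin s,
      ∑ i, lam i (a i) ^ t * e i b a = 0 := by
    intro t ht b hb a
    have h1 := hc t ht b hb a
    have h2 := hc' t ht b hb a
    simp only [he, mul_sub, Finset.sum_sub_distrib, h1, h2, sub_zero]
  have hsub : ∀ i a, repairSum e i2 (s+1) i a
      = repairSum c i2 (s+1) i a - repairSum c' i2 (s+1) i a := by
    intro i a
    simp only [he, repairSum, Finset.sum_sub_distrib]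
    ring
  have hR0 : ∀ i ∈ R, ∀ a : Fin n → Fin s, repairSum e i2 (s+1) i a = 0 := by
    intro i hi a
    rw [hsub, heq i hi a, sub_self]
  have core := fun a => core_lemma hkn lam hlam i2 R hi2R hRcard e hcode hR0 a
  constructor
  · intro b hb a
    rw [← sub_eq_zero]
    show e i2 b a = 0
    simp only [Finset.mem_union, Finset.mem_Icc, Finset.mem_singleton] at hb
    rcases hb with ⟨hb1, hb2⟩ | rfl
    · have hjlt : b - 1 < s := by omega
      set jf : Fin s := ⟨b - 1, hjlt⟩ with hjf
      set a0 := Function.update a i2 (a i2 - jf) with ha0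
      have hup : Function.update a0 i2 (a0 i2 + jf) = a := by
        rw [show a0 i2 + jf = a i2 by rw [ha0, Function.update_self, sub_add_cancel],
          ha0, Function.update_idem, Function.update_eq_self]
      have h := ((core a0).1 jf).1 (by simp only [hjf]; omega)
      rw [hup] at h
      have hbj : (jf : ℕ) + 1 = b := by simp only [hjf]; omega
      rwa [hbj] at h
    · set jf : Fin s := (open Fin.NatCast in ((s - 1 : ℕ) : Fin s)) with hjf
      set a0 := Function.update a i2 (a i2 - jf) with ha0
      have hup : Function.update a0 i2 (a0 i2 + jf) = a := by
        rw [show a0 i2 + jf = a i2 by rw [ha0, Function.update_self, sub_add_cancel],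
          ha0, Function.update_idem, Function.update_eq_self]
      have h := ((core a0).1 jf).2 (by
        simp only [hjf, Fin.val_natCast]
        exact Nat.mod_eq_of_lt (by omega))
      rwa [hup] at h
  · intro a
    have h := (core a).2 i1 (fun h => by have := hR i1 h; omega)
      (fun h => by rw [h] at hi1; omega)
    rw [hsub] at h
    exact sub_eq_zero.mp h
end

section
/- Let h ≥ 2 and s ≥ 1, set d := k + s − 1 and m := s + h − 1, assume h + d ≤ n, and let λ : {1,…,n} × {0,…,s−1} → F be injective. For every codeword c of C(n,k,s,m,λ), every u ∈ {1,…,h}, every a ∈ {0,…,s−1}^n, and every t ∈ {0,…,n−k−1}, the following identity holds: ∑_{j=0}^{s−2} λ(u, a_u⊕j)^t · c(u, j+1, a(u, a_u⊕j)) + λ(u, a_u⊕(s−1))^t · c(u, s+u−1, a(u, a_u⊕(s−1))) + ∑_{i∈{1,…,n}∖{u}} λ(i, a_i)^t · ( ∑_{j=0}^{s−2} c(i, j+1, a(u, a_u⊕j)) + c(i, s+u−1, a(u, a_u⊕(s−1))) ) = 0. -/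
open Fin.NatCast

/-- the key identity for the first round of the repair of the
`u`-th failed node in `C(n,k,s,m,λ)` with `h ≥ 2`, `s ≥ 1`, `d := k+s-1`,
`m := s+h-1` and `h + d ≤ n`.  The failed node `u : Fin n` satisfies
`(u : ℕ) < h` (0-indexed version of `u ∈ {1,…,h}`); in particular the paper's
block index `s+u-1` (with `u` 1-indexed) is `s + (u : ℕ)` here.  Addition on
`Fin s` is addition modulo `s`, so `a u + (j : Fin s)` is `a_u ⊕ j` and
`Function.update a u (a u + (j : Fin s))` is `a(u, a_u ⊕ j)`. -/
theorem stmt_10 {F : Type*} [Field F] (n k h s : ℕ) [NeZero s]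
    (hk : 1 ≤ k) (hh : 2 ≤ h) (hn : h + (k + s - 1) ≤ n)
    (lam : Fin n → Fin s → F)
    (hlam : Function.Injective fun p : Fin n × Fin s => lam p.1 p.2)
    (c : Fin n → ℕ → (Fin n → Fin s) → F)
    (hc : IsCodeword k s (s + h - 1) lam c)
    (u : Fin n) (hu : (u : ℕ) < h)
    (a : Fin n → Fin s) (t : ℕ) (ht : t < n - k) :
    ∑ j ∈ Finset.range (s - 1),
        lam u (a u + (j : Fin s)) ^ t
          * c u (j + 1) (Function.update a u (a u + (j : Fin s)))
      + lam u (a u + ((s - 1 : ℕ) : Fin s)) ^ t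
          * c u (s + (u : ℕ)) (Function.update a u (a u + ((s - 1 : ℕ) : Fin s)))
      + ∑ i ∈ Finset.univ.erase u,
          lam i (a i) ^ t
            * (∑ j ∈ Finset.range (s - 1),
                  c i (j + 1) (Function.update a u (a u + (j : Fin s)))
                + c i (s + (u : ℕ)) (Function.update a u (a u + ((s - 1 : ℕ) : Fin s))))
      = 0 := by
  have hs : 1 ≤ s := Nat.one_le_iff_ne_zero.mpr (NeZero.ne s)
  have key : ∀ x : Fin s, ∀ b ∈ Finset.Icc 1 (s + h - 1),
      lam u (a u + x) ^ t * c u b (Function.update a u (a u + x))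
        + ∑ i ∈ Finset.univ.erase u,
            lam i (a i) ^ t * c i b (Function.update a u (a u + x)) = 0 := by
    intro x b hb
    have h0 := hc t ht b hb (Function.update a u (a u + x))
    rw [← Finset.add_sum_erase _ _ (Finset.mem_univ u)] at h0
    rw [← h0]
    congr 1
    · rw [Function.update_self]
    · exact Finset.sum_congr rfl fun i hi => by
        rw [Function.update_of_ne (Finset.ne_of_mem_erase hi)]
  have key1 : ∀ j ∈ Finset.range (s - 1),
      lam u (a u + (j : Fin s)) ^ t
          * c u (j + 1) (Function.update a u (a u + (j : Fin s)))
        + ∑ i ∈ Finset.univ.erase u,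
            lam i (a i) ^ t * c i (j + 1) (Function.update a u (a u + (j : Fin s))) = 0 := by
    intro j hj
    exact key _ _ (by simp only [Finset.mem_range] at hj; simp [Finset.mem_Icc]; omega)
  have key2 := key ((s - 1 : ℕ) : Fin s) (s + (u : ℕ))
    (by simp [Finset.mem_Icc]; omega)
  have hsum : ∑ j ∈ Finset.range (s - 1),
      (lam u (a u + (j : Fin s)) ^ t
          * c u (j + 1) (Function.update a u (a u + (j : Fin s)))
        + ∑ i ∈ Finset.univ.erase u,
            lam i (a i) ^ t * c i (j + 1) (Function.update a u (a u + (j : Fin s)))) = 0 :=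
    Finset.sum_eq_zero key1
  rw [Finset.sum_add_distrib] at hsum
  calc ∑ j ∈ Finset.range (s - 1),
        lam u (a u + (j : Fin s)) ^ t
          * c u (j + 1) (Function.update a u (a u + (j : Fin s)))
      + lam u (a u + ((s - 1 : ℕ) : Fin s)) ^ t
          * c u (s + (u : ℕ)) (Function.update a u (a u + ((s - 1 : ℕ) : Fin s)))
      + ∑ i ∈ Finset.univ.erase u,
          lam i (a i) ^ t
            * (∑ j ∈ Finset.range (s - 1),
                  c i (j + 1) (Function.update a u (a u + (j : Fin s)))
                + c i (s + (u : ℕ)) (Function.update a u (a u + ((s - 1 : ℕ) : Fin s))))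
      = (∑ j ∈ Finset.range (s - 1),
            lam u (a u + (j : Fin s)) ^ t
              * c u (j + 1) (Function.update a u (a u + (j : Fin s)))
          + ∑ j ∈ Finset.range (s - 1), ∑ i ∈ Finset.univ.erase u,
              lam i (a i) ^ t * c i (j + 1) (Function.update a u (a u + (j : Fin s))))
        + (lam u (a u + ((s - 1 : ℕ) : Fin s)) ^ t
            * c u (s + (u : ℕ)) (Function.update a u (a u + ((s - 1 : ℕ) : Fin s)))
          + ∑ i ∈ Finset.univ.erase u,
              lam i (a i) ^ t
                * c i (s + (u : ℕ)) (Function.update a u (a u + ((s - 1 : ℕ) : Fin s)))) := by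
        simp only [mul_add, Finset.mul_sum, Finset.sum_add_distrib]
        rw [Finset.sum_comm]
        ring
    _ = 0 + 0 := by rw [hsum, key2]
    _ = 0 := by ring
end

section
/- Let h ≥ 2 and s ≥ 1, set d := k + s − 1 and m := s + h − 1, assume h + d ≤ n, and let λ : {1,…,n} × {0,…,s−1} → F be injective. Fix distinct u, i ∈ {1,…,h}. If c and c' are codewords of C(n,k,s,m,λ) such that (a) c(u,b,a) = c'(u,b,a) for every b ∈ {1,…,s−1} and every a ∈ {0,…,s−1}^n, and (b) ∑_{j=0}^{s−2} c(u, j+1, a(i, a_i⊕j)) + c(u, s+i−1, a(i, a_i⊕(s−1))) = ∑_{j=0}^{s−2} c'(u, j+1, a(i, a_i⊕j)) + c'(u, s+i−1, a(i, a_i⊕(s−1))) for every a ∈ {0,…,s−1}^n, then c(u, s+i−1, a) = c'(u, s+i−1, a) for every a ∈ {0,…,s−1}^n. -/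
open Fin.NatCast

theorem repairSum_last_eq_of_eq {F : Type*} [Field F] {n s : ℕ} [NeZero s]
    {c c' : Fin n → ℕ → (Fin n → Fin s) → F} {w i : Fin n} {bLast : ℕ}
    (hlow : ∀ b ∈ Finset.Icc 1 (s - 1), ∀ a : Fin n → Fin s, c i b a = c' i b a)
    {a : Fin n → Fin s} (h : repairSum c w bLast i a = repairSum c' w bLast i a) :
    c i bLast (Function.update a w (a w + ((s - 1 : ℕ) : Fin s))) =
      c' i bLast (Function.update a w (a w + ((s - 1 : ℕ) : Fin s))) := by
  have hsum : ∑ j ∈ Finset.range (s - 1), c i (j + 1) (Function.update a w (a w + (j : Fin s)))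
      = ∑ j ∈ Finset.range (s - 1), c' i (j + 1) (Function.update a w (a w + (j : Fin s))) :=
    Finset.sum_congr rfl fun j hj =>
      hlow (j + 1) (Finset.mem_Icc.mpr ⟨Nat.le_add_left 1 j, Finset.mem_range.mp hj⟩) _
  unfold repairSum at h
  rw [hsum] at h
  exact add_left_cancel h

theorem stmt_12_general {F : Type*} [Field F] (n s : ℕ) [NeZero s]
    (u i : Fin n)
    (c c' : Fin n → ℕ → (Fin n → Fin s) → F)
    (ha : ∀ b ∈ Finset.Icc 1 (s - 1), ∀ a : Fin n → Fin s, c u b a = c' u b a)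
    (hb : ∀ a : Fin n → Fin s,
      repairSum c i (s + (i : ℕ)) u a = repairSum c' i (s + (i : ℕ)) u a) :
    ∀ a : Fin n → Fin s, c u (s + (i : ℕ)) a = c' u (s + (i : ℕ)) a := by
  intro a
  -- Rotating digit `i` of `a` back by `s - 1` makes the last term of the repair sum sit at `a`.
  have hlast := repairSum_last_eq_of_eq ha
    (hb (Function.update a i (a i - ((s - 1 : ℕ) : Fin s))))
  simpa using hlast

/-- second-round recovery in `C(n,k,s,m,λ)`, with `h ≥ 2`,
`s ≥ 1`, `d := k+s-1`, `m := s+h-1`, `h + d ≤ n`.  The distinct failed nodes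
`u, i : Fin n` satisfy `(u : ℕ) < h` and `(i : ℕ) < h` (0-indexed versions of
`u, i ∈ {1,…,h}`), so the paper's block index `s+i-1` is `s + (i : ℕ)` here.
If two codewords agree at node `u` on blocks `b ∈ {1,…,s-1}` and the exchanged
sums `∑_{j=0}^{s-2} c(u,j+1,a(i,a_i⊕j)) + c(u,s+i-1,a(i,a_i⊕(s-1)))` agree,
then they agree at node `u` on block `s+i-1`. -/
theorem stmt_12 {F : Type*} [Field F] (n k h s : ℕ) [NeZero s]
    (hk : 1 ≤ k) (hh : 2 ≤ h) (hn : h + (k + s - 1) ≤ n)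
    (lam : Fin n → Fin s → F)
    (hlam : Function.Injective fun p : Fin n × Fin s => lam p.1 p.2)
    (u i : Fin n) (hu : (u : ℕ) < h) (hi : (i : ℕ) < h) (hui : u ≠ i)
    (c c' : Fin n → ℕ → (Fin n → Fin s) → F)
    (hc : IsCodeword k s (s + h - 1) lam c) (hc' : IsCodeword k s (s + h - 1) lam c')
    (ha : ∀ b ∈ Finset.Icc 1 (s - 1), ∀ a : Fin n → Fin s, c u b a = c' u b a)
    (hb : ∀ a : Fin n → Fin s,
      repairSum c i (s + (i : ℕ)) u a = repairSum c' i (s + (i : ℕ)) u a) :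
    ∀ a : Fin n → Fin s, c u (s + (i : ℕ)) a = c' u (s + (i : ℕ)) a :=
  stmt_12_general n s u i c c' ha hb
end

section
/- Let h ≥ 2 and s ≥ 1, set d := k + s − 1 and m := s + h − 1, assume h + d ≤ n, and let λ : {1,…,n} × {0,…,s−1} → F be injective. Let 𝓕, 𝓡 ⊆ {1,…,n} be disjoint sets with |𝓕| = h and |𝓡| = d. Then there exist: first-round download functions φ_{u,j} : N → M for each u ∈ 𝓕 and j ∈ 𝓡; exchange functions ψ_{u,v} : (𝓡 → M) → M for each ordered pair of distinct u, v ∈ 𝓕; and recovery functions ρ_u : (𝓡 → M) × ((𝓕∖{u}) → M) → N for each u ∈ 𝓕; such that for every codeword c of C(n,k,s,m,λ) and every u ∈ 𝓕, ρ_u( (j ↦ φ_{u,j}(c_j)), (v ↦ ψ_{v,u}(j ↦ φ_{v,j}(c_j))) ) = c_u, where c_i ∈ N denotes the i-th node (b,a) ↦ c(i,b,a). Since each of the h·d first-round messages and each of the h(h−1) exchange messages consists of s^n symbols of F, the total repair bandwidth is h(d+h−1)·s^n symbols, which meets the cooperative cut-set bound |𝓕|(|𝓡|+|𝓕|−1)·l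 / (|𝓕|+|𝓡|−k) with equality for node size l = (d+h−k)·s^n. -/
open Finset Polynomial Function

section PowerSums

variable {F : Type*} [Field F] {ι : Type*} [Fintype ι]

theorem eq_of_forall_sum_pow_mul_eq {z : ι → F} (hz : Injective z) {N : ℕ}
    (hN : Fintype.card ι ≤ N) {U V : ι → F}
    (h : ∀ t < N, ∑ i, z i ^ t * U i = ∑ i, z i ^ t * V i) : U = V := by
  let e := Fintype.equivFin ι
  have hzero : (U - V) ∘ e.symm = 0 := by
    refine Matrix.eq_zero_of_forall_pow_sum_mul_pow_eq_zero (f := z ∘ e.symm)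
      (hz.comp e.symm.injective) fun t => ?_
    simp only [comp_apply, Pi.sub_apply]
    rw [e.symm.sum_comp (fun i => (U i - V i) * z i ^ (t : ℕ))]
    simp only [mul_comm _ (z _ ^ _), mul_sub, sum_sub_distrib]
    exact sub_eq_zero.2 (h t (t.2.trans_le hN))
  funext i
  simpa [sub_eq_zero] using congrFun hzero (e i)

noncomputable def powerSumSolve (z : ι → F) (N : ℕ) (r : ℕ → F) : ι → F :=
  invFun (fun (U : ι → F) (t : Fin N) => ∑ i, z i ^ (t : ℕ) * U i) fun t => r t

theorem powerSumSolve_eq {z : ι → F} (hz : Injective z) {N : ℕ} (hN : Fintype.card ι ≤ N)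
    {r : ℕ → F} {U : ι → F} (hU : ∀ t < N, ∑ i, z i ^ t * U i = r t) :
    powerSumSolve z N r = U := by
  have hsol := invFun_eq (f := fun (U : ι → F) (t : Fin N) => ∑ i, z i ^ (t : ℕ) * U i)
    ⟨U, funext fun t => hU t t.2⟩
  refine eq_of_forall_sum_pow_mul_eq hz hN fun t ht => ?_
  rw [hU t ht]
  exact congrFun hsol ⟨t, ht⟩

end PowerSums

section NodePoly

variable {F : Type*} [Field F]

noncomputable def nodePoly (m : ℕ) (v : ℕ → F) : F[X] :=
  ∑ i ∈ range m, C (v (i + 1)) * X ^ i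

theorem degree_nodePoly_lt (m : ℕ) (v : ℕ → F) : (nodePoly m v).degree < m := by
  rw [nodePoly, ← Fin.sum_univ_eq_sum_range (fun i => C (v (i + 1)) * X ^ i)]
  exact degree_sum_fin_lt _

theorem coeff_nodePoly {m b : ℕ} (hb : b ∈ Icc 1 m) (v : ℕ → F) :
    (nodePoly m v).coeff (b - 1) = v b := by
  obtain ⟨hb1, hbm⟩ := mem_Icc.1 hb
  simp only [nodePoly, finsetSum_coeff, coeff_C_mul_X_pow, sum_ite_eq, mem_range]
  rw [if_pos (by omega), Nat.sub_add_cancel hb1]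

theorem eval_nodePoly (m : ℕ) (v : ℕ → F) (θ : F) :
    (nodePoly m v).eval θ = ∑ i ∈ range m, v (i + 1) * θ ^ i := by
  simp [nodePoly, eval_finsetSum]

end NodePoly

theorem IsCodeword.sum_mul_eval_nodePoly {F : Type*} [Field F] {n k s m : ℕ}
    {lam : Fin n → Fin s → F} {c : Fin n → ℕ → (Fin n → Fin s) → F}
    (hc : IsCodeword k s m lam c) {t : ℕ} (ht : t < n - k) (a : Fin n → Fin s) (θ : F) :
    ∑ i, lam i (a i) ^ t * (nodePoly m fun b => c i b a).eval θ = 0 := by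
  simp only [eval_nodePoly, mul_sum]
  rw [sum_comm]
  refine sum_eq_zero fun b hb => ?_
  have hb' : b + 1 ∈ Icc 1 m := mem_Icc.2 ⟨by omega, by have := mem_range.1 hb; omega⟩
  calc ∑ i, lam i (a i) ^ t * (c i (b + 1) a * θ ^ b)
      = (∑ i, lam i (a i) ^ t * c i (b + 1) a) * θ ^ b := by
        rw [sum_mul]; exact sum_congr rfl fun i _ => by ring
    _ = 0 := by rw [hc t ht (b + 1) hb' a, zero_mul]

theorem sum_sum_update_eq {R ι α : Type*} [NonUnitalNonAssocSemiring R] [Fintype ι]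
    [DecidableEq ι] [Fintype α] (w : ι) (a : ι → α) (f : ι → α → R) (g : ι → α → R) :
    ∑ x, ∑ i, f i (update a w x i) * g i x
      = ∑ x, f w x * g w x + ∑ i ∈ univ.erase w, f i (a i) * ∑ x, g i x := by
  rw [sum_comm, ← add_sum_erase _ _ (mem_univ w)]
  simp only [update_self, mul_sum]
  congr 1
  refine sum_congr rfl fun i hi => sum_congr rfl fun x _ => ?_
  rw [update_of_ne (ne_of_mem_erase hi)]

theorem injective_sumElim_of_injective {α : Type*} {n s : ℕ} {lam : Fin n → Fin s → α}
    (Rs : Finset (Fin n)) (hlam : Injective fun p : Fin n × Fin s => lam p.1 p.2) (w : Fin n)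
    (a : Fin n → Fin s) :
    Injective (Sum.elim (lam w) fun i : ↥(univ.erase w \ Rs) => lam i (a i)) := by
  have key : ∀ {i i' x x'}, lam i x = lam i' x' → i = i' ∧ x = x' := fun h =>
    Prod.ext_iff.1 (hlam (a₁ := (_, _)) (a₂ := (_, _)) h)
  have hne : ∀ i ∈ univ.erase w \ Rs, i ≠ w := fun i hi => ne_of_mem_erase (mem_sdiff.1 hi).1
  rintro (x | ⟨i, hi⟩) (x' | ⟨i', hi'⟩) h <;> simp only [Sum.elim_inl, Sum.elim_inr] at h
  · rw [(key h).2]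
  · exact absurd (key h).1.symm (hne i' hi')
  · exact absurd (key h).1 (hne i hi)
  · exact congrArg Sum.inr (Subtype.ext (key h).1)

section Repair

variable {F : Type*} [Field F] {n s : ℕ} (lam : Fin n → Fin s → F) (j₀ : Fin n)

def repairPoint (w : Fin n) (r x : Fin s) : F :=
  if x = r then lam w r else lam j₀ (r - x)

noncomputable def layerEval (m : ℕ) (w : Fin n) (cj : ℕ → (Fin n → Fin s) → F)
    (a : Fin n → Fin s) (x : Fin s) : F :=
  (nodePoly m fun b => cj b (update a w x)).eval (repairPoint lam j₀ w (a w) x)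

noncomputable def repairMessage (m : ℕ) (w : Fin n) (cj : ℕ → (Fin n → Fin s) → F)
    (a : Fin n → Fin s) : F :=
  ∑ x, layerEval lam j₀ m w cj a x

variable (Rs : Finset (Fin n)) (N : ℕ)

noncomputable def firstRoundSolve (w : Fin n) (D : Rs → (Fin n → Fin s) → F)
    (a : Fin n → Fin s) : Fin s ⊕ ↥(univ.erase w \ Rs) → F :=
  powerSumSolve (Sum.elim (lam w) fun i => lam i (a i)) N
    fun t => -∑ j : Rs, lam j (a j) ^ t * D j a

theorem firstRoundSolve_eq {k m : ℕ} (hlam : Injective fun p : Fin n × Fin s => lam p.1 p.2)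
    {c : Fin n → ℕ → (Fin n → Fin s) → F} (hc : IsCodeword k s m lam c) {w : Fin n}
    (hw : w ∉ Rs) (hRs : k + s - 1 ≤ #Rs) (a : Fin n → Fin s) :
    firstRoundSolve lam Rs (n - k) w (fun j => repairMessage lam j₀ m w (c j)) a =
      Sum.elim (layerEval lam j₀ m w (c w) a) fun i : ↥(univ.erase w \ Rs) =>
        repairMessage lam j₀ m w (c i) a := by
  have hsub : Rs ⊆ univ.erase w := fun j hj =>
    mem_erase.2 ⟨ne_of_mem_of_not_mem hj hw, mem_univ j⟩
  have hcard : Fintype.card (Fin s ⊕ ↥(univ.erase w \ Rs)) ≤ n - k := by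
    have hRn := card_le_card hsub
    rw [card_erase_of_mem (mem_univ w), card_univ, Fintype.card_fin] at hRn
    rw [Fintype.card_sum, Fintype.card_fin, Fintype.card_coe, card_sdiff_of_subset hsub,
      card_erase_of_mem (mem_univ w), card_univ, Fintype.card_fin]
    have := w.pos
    omega
  refine powerSumSolve_eq (injective_sumElim_of_injective Rs hlam w a) hcard fun t ht => ?_
  have hpar := sum_sum_update_eq w a (fun i y => lam i y ^ t)
    (fun i => layerEval lam j₀ m w (c i) a)
  have hlayer : ∀ x, ∑ i, lam i (update a w x i) ^ t * layerEval lam j₀ m w (c i) a x = 0 :=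
    fun x => hc.sum_mul_eval_nodePoly ht (update a w x) _
  rw [sum_eq_zero fun x _ => hlayer x, ← sum_sdiff hsub] at hpar
  simp only [Fintype.sum_sum_type, Sum.elim_inl, Sum.elim_inr]
  rw [sum_coe_sort (univ.erase w \ Rs) fun i => lam i (a i) ^ t * repairMessage lam j₀ m w (c i) a,
    sum_coe_sort Rs fun i => lam i (a i) ^ t * repairMessage lam j₀ m w (c i) a]
  unfold repairMessage
  linear_combination -hpar

theorem layerEval_self (m : ℕ) (w : Fin n) (cj : ℕ → (Fin n → Fin s) → F)
    (a : Fin n → Fin s) :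
    layerEval lam j₀ m w cj a (a w) = (nodePoly m fun b => cj b a).eval (lam w (a w)) := by
  simp [layerEval, repairPoint]

theorem layerEval_of_ne (m : ℕ) (w : Fin n) (cj : ℕ → (Fin n → Fin s) → F) (a : Fin n → Fin s)
    {x : Fin s} (hx : x ≠ a w) :
    layerEval lam j₀ m w cj a x
      = (nodePoly m fun b => cj b (update a w x)).eval (lam j₀ (a w - x)) := by
  simp [layerEval, repairPoint, hx]

noncomputable def baseValue (u : Fin n) (D : Rs → (Fin n → Fin s) → F) (a : Fin n → Fin s)
    (e : Fin s) : F :=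
  firstRoundSolve lam Rs N u D (update a u (a u + e)) (Sum.inl (a u))

noncomputable def exchangeMessage (v u : Fin n) (D : Rs → (Fin n → Fin s) → F)
    (a : Fin n → Fin s) : F :=
  if h : u ∈ univ.erase v \ Rs then firstRoundSolve lam Rs N v D a (Sum.inr ⟨u, h⟩) else 0

def interpolationNodes [NeZero s] (Fs : Finset (Fin n)) (a : Fin n → Fin s) :
    Finset (Fin n × Fin s) :=
  {j₀} ×ˢ univ.erase 0 ∪ Fs.image fun w => (w, a w)

theorem card_interpolationNodes [NeZero s] {Fs : Finset (Fin n)} (hj₀ : j₀ ∉ Fs)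
    (a : Fin n → Fin s) : #(interpolationNodes j₀ Fs a) = s - 1 + #Fs := by
  have hdisj : Disjoint ({j₀} ×ˢ univ.erase 0) (Fs.image fun w => (w, a w)) := by
    simp only [disjoint_left, mem_product, mem_singleton, mem_image, not_exists, not_and]
    rintro _ ⟨rfl, -⟩ w hw rfl
    exact hj₀ hw
  rw [interpolationNodes, card_union_of_disjoint hdisj, card_product, card_singleton,
    card_erase_of_mem (mem_univ _), card_univ, Fintype.card_fin, one_mul,
    card_image_of_injective _ fun w w' h => (Prod.ext_iff.1 h).1]

noncomputable def pointValue (Fs : Finset (Fin n)) (u : Fin n) (D : Rs → (Fin n → Fin s) → F)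
    (X : Fs.erase u → (Fin n → Fin s) → F) (a : Fin n → Fin s) (p : Fin n × Fin s) : F :=
  if p.1 = j₀ then baseValue lam Rs N u D a p.2
  else if h : p.1 ∈ Fs.erase u then
    X ⟨p.1, h⟩ a - ∑ x ∈ univ.erase (a p.1), baseValue lam Rs N u D (update a p.1 x) (a p.1 - x)
  else firstRoundSolve lam Rs N u D a (Sum.inl (a u))

noncomputable def recover [NeZero s] (Fs : Finset (Fin n)) (u : Fin n)
    (D : Rs → (Fin n → Fin s) → F) (X : Fs.erase u → (Fin n → Fin s) → F) (b : ℕ)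
    (a : Fin n → Fin s) : F :=
  (Lagrange.interpolate (interpolationNodes j₀ Fs a) (fun p => lam p.1 p.2)
    (pointValue lam j₀ Rs N Fs u D X a)).coeff (b - 1)

section Correctness

variable {k m : ℕ} {lam} (hlam : Injective fun p : Fin n × Fin s => lam p.1 p.2)
  {c : Fin n → ℕ → (Fin n → Fin s) → F} (hc : IsCodeword k s m lam c) {Rs}
  (hRs : k + s - 1 ≤ #Rs)
include hlam hc hRs

theorem baseValue_eq [NeZero s] {u : Fin n} (hu : u ∉ Rs) (a : Fin n → Fin s) {e : Fin s}
    (he : e ≠ 0) :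
    baseValue lam Rs (n - k) u (fun j => repairMessage lam j₀ m u (c j)) a e
      = (nodePoly m fun b => c u b a).eval (lam j₀ e) := by
  rw [baseValue, firstRoundSolve_eq lam j₀ Rs hlam hc hu hRs, Sum.elim_inl,
    layerEval_of_ne _ _ _ _ _ _ (by simpa using he)]
  simp

theorem exchangeMessage_eq {u v : Fin n} (hu : u ∉ Rs) (hv : v ∉ Rs) (huv : u ≠ v)
    (a : Fin n → Fin s) :
    exchangeMessage lam Rs (n - k) v u (fun j => repairMessage lam j₀ m v (c j)) a
      = repairMessage lam j₀ m v (c u) a := by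
  rw [exchangeMessage, dif_pos (mem_sdiff.2 ⟨mem_erase.2 ⟨huv, mem_univ u⟩, hu⟩),
    firstRoundSolve_eq lam j₀ Rs hlam hc hv hRs, Sum.elim_inr]

theorem repairMessage_sub_sum_baseValue [NeZero s] {u : Fin n} (hu : u ∉ Rs) (w : Fin n)
    (a : Fin n → Fin s) :
    repairMessage lam j₀ m w (c u) a - ∑ x ∈ univ.erase (a w),
        baseValue lam Rs (n - k) u (fun j => repairMessage lam j₀ m u (c j)) (update a w x)
          (a w - x)
      = (nodePoly m fun b => c u b a).eval (lam w (a w)) := by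
  have hcorr : ∀ x ∈ univ.erase (a w), layerEval lam j₀ m w (c u) a x
      = baseValue lam Rs (n - k) u (fun j => repairMessage lam j₀ m u (c j)) (update a w x)
          (a w - x) := by
    intro x hx
    rw [layerEval_of_ne _ _ _ _ _ _ (ne_of_mem_erase hx), baseValue_eq j₀ hlam hc hRs hu _
      (sub_ne_zero.2 (ne_of_mem_erase hx).symm)]
  rw [repairMessage, ← add_sum_erase _ _ (mem_univ (a w)), ← sum_congr rfl hcorr,
    add_sub_cancel_right, layerEval_self]

theorem pointValue_eq [NeZero s] {Fs : Finset (Fin n)} (hdisj : Disjoint Fs Rs) (hj₀ : j₀ ∉ Fs)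
    {u : Fin n} (hu : u ∈ Fs) (a : Fin n → Fin s) {p : Fin n × Fin s}
    (hp : p ∈ interpolationNodes j₀ Fs a) :
    pointValue lam j₀ Rs (n - k) Fs u (fun j => repairMessage lam j₀ m u (c j))
        (fun v => exchangeMessage lam Rs (n - k) v u (fun j => repairMessage lam j₀ m v (c j)))
        a p
      = (nodePoly m fun b => c u b a).eval (lam p.1 p.2) := by
  have huR : u ∉ Rs := disjoint_left.1 hdisj hu
  simp only [interpolationNodes, mem_union, mem_product, mem_singleton, mem_erase, mem_univ,
    mem_image] at hp
  rcases hp with ⟨hp₁, hp₂, -⟩ | ⟨w, hw, rfl⟩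
  · rw [pointValue, if_pos hp₁, baseValue_eq j₀ hlam hc hRs huR _ hp₂, hp₁]
  rw [pointValue, if_neg (ne_of_mem_of_not_mem hw hj₀)]
  by_cases hwu : w = u
  · subst hwu
    rw [dif_neg (by simp), firstRoundSolve_eq lam j₀ Rs hlam hc huR hRs, Sum.elim_inl,
      layerEval_self]
  · rw [dif_pos (mem_erase.2 ⟨hwu, hw⟩), exchangeMessage_eq j₀ hlam hc hRs huR
      (disjoint_left.1 hdisj hw) (Ne.symm hwu),
      repairMessage_sub_sum_baseValue j₀ hlam hc hRs huR]

theorem recover_eq [NeZero s] {Fs : Finset (Fin n)} (hdisj : Disjoint Fs Rs) (hj₀ : j₀ ∉ Fs)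
    (hm : m ≤ s - 1 + #Fs) {u : Fin n} (hu : u ∈ Fs) {b : ℕ} (hb : b ∈ Icc 1 m)
    (a : Fin n → Fin s) :
    recover lam j₀ Rs (n - k) Fs u (fun j => repairMessage lam j₀ m u (c j))
        (fun v => exchangeMessage lam Rs (n - k) v u (fun j => repairMessage lam j₀ m v (c j)))
        b a
      = c u b a := by
  have hdeg : (nodePoly m fun b => c u b a).degree < #(interpolationNodes j₀ Fs a) :=
    (degree_nodePoly_lt m _).trans_le (by rw [card_interpolationNodes j₀ hj₀]; exact_mod_cast hm)
  rw [recover, ← Lagrange.eq_interpolate_of_eval_eq _ hlam.injOn hdeg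
    fun p hp => (pointValue_eq j₀ hlam hc hRs hdisj hj₀ hu a hp).symm, coeff_nodePoly hb]

end Correctness

end Repair

theorem stmt_13_general {F : Type*} [Field F] (n k h s : ℕ) [NeZero s]
    (hk : 1 ≤ k)
    (lam : Fin n → Fin s → F)
    (hlam : Function.Injective fun p : Fin n × Fin s => lam p.1 p.2)
    (Fs Rs : Finset (Fin n)) (hdisj : Disjoint Fs Rs)
    (hFcard : Fs.card = h) (hRcard : Rs.card = k + s - 1) :
    ∃ (φ : Fin n → Fin n → (ℕ → (Fin n → Fin s) → F) → ((Fin n → Fin s) → F))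
      (ψ : Fin n → Fin n → ({j // j ∈ Rs} → (Fin n → Fin s) → F) → ((Fin n → Fin s) → F))
      (ρ : (u : Fin n) → ({j // j ∈ Rs} → (Fin n → Fin s) → F) →
            ({v // v ∈ Fs.erase u} → (Fin n → Fin s) → F) → (ℕ → (Fin n → Fin s) → F)),
      ∀ c : Fin n → ℕ → (Fin n → Fin s) → F, IsCodeword k s (s + h - 1) lam c →
        ∀ u ∈ Fs, ∀ b ∈ Finset.Icc 1 (s + h - 1), ∀ a : Fin n → Fin s,
          ρ u (fun j => φ u j.1 (c j.1))
              (fun v => ψ v.1 u (fun j => φ v.1 j.1 (c j.1))) b a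
            = c u b a := by
  obtain ⟨j₀, hj₀⟩ : Rs.Nonempty := by
    rw [← card_pos, hRcard]
    have := NeZero.pos s
    omega
  refine ⟨fun w _ => repairMessage lam j₀ (s + h - 1) w,
    fun v u => exchangeMessage lam Rs (n - k) v u, recover lam j₀ Rs (n - k) Fs,
    fun c hc u hu b hb a => ?_⟩
  exact recover_eq j₀ hlam hc hRcard.ge hdisj (disjoint_right.1 hdisj hj₀)
    (by rw [hFcard]; omega) hu hb a

/-- `C(n,k,s,m,λ)` is an `(h,d)`-MSR code under the cooperative
model, where `h ≥ 2`, `s ≥ 1`, `d := k+s-1`, `m := s+h-1` and `h + d ≤ n`.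
For any `h` failed nodes `Fs` and any `d` helper nodes `Rs` there exist
first-round download functions `φ u j` (one message, i.e. one element of
`M = (Fin n → Fin s) → F ≅ F^(s^n)`, sent from helper `j` to failed node `u`),
exchange functions `ψ u v` (one message of `M` computed by `u` from its
first-round downloads and sent to failed node `v`), and recovery functions
`ρ u`, such that every failed node recovers all of its coordinates `(b,a)`,
`b ∈ {1,…,s+h-1}`.  The total bandwidth, `h·d + h(h-1)` messages of `s^n`
field symbols each, meets the cooperative cut-set bound with equality. -/
theorem stmt_13 {F : Type*} [Field F] (n k h s : ℕ) [NeZero s]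
    (hk : 1 ≤ k) (hh : 2 ≤ h) (hn : h + (k + s - 1) ≤ n)
    (lam : Fin n → Fin s → F)
    (hlam : Function.Injective fun p : Fin n × Fin s => lam p.1 p.2)
    (Fs Rs : Finset (Fin n)) (hdisj : Disjoint Fs Rs)
    (hFcard : Fs.card = h) (hRcard : Rs.card = k + s - 1) :
    ∃ (φ : Fin n → Fin n → (ℕ → (Fin n → Fin s) → F) → ((Fin n → Fin s) → F))
      (ψ : Fin n → Fin n → ({j // j ∈ Rs} → (Fin n → Fin s) → F) → ((Fin n → Fin s) → F))
      (ρ : (u : Fin n) → ({j // j ∈ Rs} → (Fin n → Fin s) → F) →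
            ({v // v ∈ Fs.erase u} → (Fin n → Fin s) → F) → (ℕ → (Fin n → Fin s) → F)),
      ∀ c : Fin n → ℕ → (Fin n → Fin s) → F, IsCodeword k s (s + h - 1) lam c →
        ∀ u ∈ Fs, ∀ b ∈ Finset.Icc 1 (s + h - 1), ∀ a : Fin n → Fin s,
          ρ u (fun j => φ u j.1 (c j.1))
              (fun v => ψ v.1 u (fun j => φ v.1 j.1 (c j.1))) b a
            = c u b a :=
  stmt_13_general n k h s hk lam hlam Fs Rs hdisj hFcard hRcard
end
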